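/- arXiv:1905.06513 — 8 statements merged into one kernel-verified Lean document; each statement's English description precedes it below -/
import Mathlib

section
/- Let q be a power of an odd prime, let n be an odd integer with 1 ≤ n ≤ q, set k = (n+1)/2, and let a_1, …, a_n be distinct elements of F_q with S = {a_1, …, a_n}. Then there exist nonzero elements v_1, …, v_n of F_q such that the extended generalized Reed–Solomon code C_egrs(S, v, q) = {(v_1 f(a_1), …, v_n f(a_n), f_{k−1}) : f ∈ F_q[x], deg f ≤ k − 1} ⊆ F_q^{n+1}, where f_{k−1} denotes the coefficient of x^{k−1} in f, is self-dual if and only if η_q(−Δ_S(a)) = 1 for all a ∈ S. -/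
/-!
Write `Δᵢ = ∏_{j ≠ i} (aᵢ - aⱼ)` and `n = 2d + 1`. For `f, g` of degree at most `d` the last
coordinates of the codewords multiply to `f_d g_d`, the coefficient of `x^(n-1)` in `f g`, and
Lagrange interpolation at the `n` nodes gives `f_d g_d = ∑ᵢ (f g)(aᵢ) / Δᵢ`. Hence
`c_f ⬝ c_g = ∑ᵢ (vᵢ² + Δᵢ⁻¹) f(aᵢ) g(aᵢ)`, so the code is self-orthogonal iff `vᵢ² = -Δᵢ⁻¹` for
all `i` (one direction by splitting the other `2d` nodes into two halves, the roots of `f` and of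
`g`). Such `vᵢ` exist iff every `-Δᵢ` is a square, and a self-orthogonal code of dimension
`d + 1 = (n + 1) / 2` in `F^(n+1)` is self-dual.
-/

open Finset Polynomial

/-- The extended generalized Reed–Solomon code
C_egrs(S,v,q) = {(v₁ f(a₁), …, vₙ f(aₙ), f_{k−1}) : f ∈ F_q[x], deg f ≤ k − 1},
where f_{k−1} is the coefficient of x^{k−1} in f. -/
def egrsCode {F : Type*} [Field F] {n : ℕ} (a v : Fin n → F) (k : ℕ) : Set (Fin (n + 1) → F) :=
  {c | ∃ f : Polynomial F, f.degree < (k : ℕ) ∧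
    c = Fin.snoc (fun i => v i * f.eval (a i)) (f.coeff (k - 1))}

/-- The dual of a code C ⊆ F_q^n with respect to the standard inner product. -/
def dualSet {F : Type*} [Field F] {n : ℕ} (C : Set (Fin n → F)) : Set (Fin n → F) :=
  {w | ∀ c ∈ C, ∑ i, w i * c i = 0}

lemma Polynomial.mem_degreeLT_succ_iff {R : Type*} [Semiring R] {f : R[X]} {d : ℕ} :
    f ∈ degreeLT R (d + 1) ↔ f.natDegree ≤ d := by
  rw [degreeLT_succ_eq_degreeLE, mem_degreeLE, natDegree_le_iff_degree_le]

section

variable {F : Type*} [Field F]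

section DualSet

variable {N : ℕ}

lemma dualSet_eq_comap_dualAnnihilator (W : Submodule F (Fin N → F)) :
    dualSet (W : Set (Fin N → F)) =
      W.dualAnnihilator.comap (dotProductEquiv F (Fin N)).toLinearMap := by
  ext w
  simp [dualSet, Submodule.mem_dualAnnihilator, dotProduct]

lemma coe_eq_dualSet_of_subset (W : Submodule F (Fin N → F))
    (hW : (W : Set (Fin N → F)) ⊆ dualSet W) (hdim : 2 * Module.finrank F W = N) :
    (W : Set (Fin N → F)) = dualSet W := by
  rw [dualSet_eq_comap_dualAnnihilator] at hW ⊢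
  have hrank := Subspace.finrank_add_finrank_dualAnnihilator_eq W
  rw [Module.finrank_fin_fun] at hrank
  refine congrArg _ (Submodule.eq_of_le_of_finrank_le hW ?_)
  rw [Submodule.comap_equiv_eq_map_symm, LinearEquiv.finrank_map_eq]
  omega

end DualSet

lemma eval_nodal_eq_zero_iff {ι : Type*} {a : ι → F} (ha : Function.Injective a)
    (s : Finset ι) (j : ι) : (Lagrange.nodal s a).eval (a j) = 0 ↔ j ∈ s := by
  simp [Lagrange.eval_nodal, prod_eq_zero_iff, sub_eq_zero, ha.eq_iff]

section EGRS

variable {n : ℕ}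

noncomputable def egrsMap (a v : Fin n → F) (k : ℕ) : F[X] →ₗ[F] Fin (n + 1) → F :=
  LinearMap.pi (Fin.snoc (fun i => v i • leval (a i)) (lcoeff F (k - 1)))

lemma egrsMap_apply (a v : Fin n → F) (k : ℕ) (f : F[X]) :
    egrsMap a v k f = Fin.snoc (fun i => v i * f.eval (a i)) (f.coeff (k - 1)) := by
  funext j
  refine Fin.lastCases ?_ (fun i => ?_) j <;> simp [egrsMap]

lemma egrsCode_eq_map (a v : Fin n → F) (k : ℕ) :
    egrsCode a v k = (degreeLT F k).map (egrsMap a v k) := by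
  ext c
  simp [egrsCode, mem_degreeLT, egrsMap_apply, eq_comm]

lemma finrank_map_egrsMap {a v : Fin n → F} (ha : Function.Injective a) (hv : ∀ i, v i ≠ 0)
    {k : ℕ} (hkn : k ≤ n) : Module.finrank F ((degreeLT F k).map (egrsMap a v k)) = k := by
  have hinj : Function.Injective ((egrsMap a v k).comp (degreeLT F k).subtype) := by
    rw [← LinearMap.ker_eq_bot, Submodule.eq_bot_iff]
    rintro ⟨f, hf⟩ hker
    have hroots : ∀ i, f.eval (a i) = 0 := fun i => by
      have := congrFun hker i.castSucc
      simpa [egrsMap_apply, hv i] using this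
    rcases eq_or_ne f 0 with rfl | hf0
    · rfl
    refine absurd (eq_zero_of_natDegree_lt_card_of_eval_eq_zero f ha hroots ?_) hf0
    rw [Fintype.card_fin]
    exact ((natDegree_lt_iff_degree_lt hf0).mpr (mem_degreeLT.mp hf)).trans_le hkn
  rw [← Submodule.range_subtype (degreeLT F k), ← LinearMap.range_comp,
    LinearMap.finrank_range_of_inj hinj, (degreeLTEquiv F k).finrank_eq, Module.finrank_fin_fun]

end EGRS

section SelfDual

variable {d : ℕ} {a : Fin (2 * d + 1) → F}

lemma egrsMap_dotProduct (ha : Function.Injective a) (v : Fin (2 * d + 1) → F) {f g : F[X]}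
    (hf : f.natDegree ≤ d) (hg : g.natDegree ≤ d) :
    egrsMap a v (d + 1) f ⬝ᵥ egrsMap a v (d + 1) g =
      ∑ i, (v i ^ 2 + (∏ j ∈ univ.erase i, (a i - a j))⁻¹) * (f.eval (a i) * g.eval (a i)) := by
  have hfg : (f * g).degree < ↑(#(univ : Finset (Fin (2 * d + 1)))) := by
    refine (degree_le_of_natDegree_le (natDegree_mul_le_of_le hf hg)).trans_lt ?_
    simp only [card_univ, Fintype.card_fin]
    exact_mod_cast (by omega : d + d < 2 * d + 1)
  have hlast : f.coeff d * g.coeff d =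
      ∑ i, (f * g).eval (a i) / ∏ j ∈ univ.erase i, (a i - a j) := by
    rw [← coeff_mul_add_eq_of_natDegree_le hf hg, ← Lagrange.coeff_eq_sum ha.injOn hfg]
    simp only [card_univ, Fintype.card_fin]
    congr 1
    omega
  rw [dotProduct, Fin.sum_univ_castSucc]
  simp only [egrsMap_apply, Fin.snoc_castSucc, Fin.snoc_last, add_tsub_cancel_right, hlast,
    ← sum_add_distrib, eval_mul, div_eq_mul_inv]
  exact sum_congr rfl fun i _ => by ring

lemma exists_natDegree_le_eval_mul_eq_zero_iff (ha : Function.Injective a) (i : Fin (2 * d + 1)) :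
    ∃ f g : F[X], f.natDegree ≤ d ∧ g.natDegree ≤ d ∧
      ∀ j, f.eval (a j) * g.eval (a j) = 0 ↔ j ≠ i := by
  have hcard_erase : #(univ.erase i) = 2 * d := by
    rw [card_erase_of_mem (mem_univ i), card_univ, Fintype.card_fin, add_tsub_cancel_right]
  obtain ⟨s, hs, hcard⟩ := exists_subset_card_eq (s := univ.erase i) (n := d) (by omega)
  refine ⟨Lagrange.nodal s a, Lagrange.nodal (univ.erase i \ s) a, ?_, ?_, fun j => ?_⟩
  · rw [Lagrange.natDegree_nodal, hcard]
  · rw [Lagrange.natDegree_nodal, card_sdiff_of_subset hs, hcard, hcard_erase]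
    omega
  · have hsj := @hs j
    simp only [mul_eq_zero, eval_nodal_eq_zero_iff ha, mem_sdiff, mem_erase, mem_univ] at hsj ⊢
    tauto

lemma egrsCode_subset_dualSet_iff (ha : Function.Injective a) (v : Fin (2 * d + 1) → F) :
    egrsCode a v (d + 1) ⊆ dualSet (egrsCode a v (d + 1)) ↔
      ∀ i, v i ^ 2 + (∏ j ∈ univ.erase i, (a i - a j))⁻¹ = 0 := by
  rw [egrsCode_eq_map]
  constructor
  · intro hsub i
    obtain ⟨f, g, hf, hg, hfg⟩ := exists_natDegree_le_eval_mul_eq_zero_iff ha i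
    have hmem : ∀ {h : F[X]}, h.natDegree ≤ d →
        egrsMap a v (d + 1) h ∈ (degreeLT F (d + 1)).map (egrsMap a v (d + 1)) :=
      fun {h} hh => ⟨h, mem_degreeLT_succ_iff.mpr hh, rfl⟩
    have horth : egrsMap a v (d + 1) f ⬝ᵥ egrsMap a v (d + 1) g = 0 :=
      hsub (hmem hf) _ (hmem hg)
    rw [egrsMap_dotProduct ha v hf hg,
      sum_eq_single i (fun j _ hj => by rw [(hfg j).2 hj, mul_zero]) (by simp)] at horth
    exact (mul_eq_zero.mp horth).resolve_right (by simp [hfg i])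
  · rintro h _ ⟨g, hg, rfl⟩ _ ⟨f, hf, rfl⟩
    refine (egrsMap_dotProduct ha v (mem_degreeLT_succ_iff.mp hg)
      (mem_degreeLT_succ_iff.mp hf)).trans ?_
    simp [h]

end SelfDual

end

theorem stmt_1_general (F : Type*) [Field F] (n : ℕ) (hne : Odd n)
    (a : Fin n → F) (ha : Function.Injective a) :
    (∃ v : Fin n → F, (∀ i, v i ≠ 0) ∧
        egrsCode a v ((n + 1) / 2) = dualSet (egrsCode a v ((n + 1) / 2))) ↔
      (∀ i : Fin n, IsSquare (-(∏ j ∈ Finset.univ.erase i, (a i - a j)))) := by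
  obtain ⟨d, rfl⟩ := hne
  rw [show (2 * d + 1 + 1) / 2 = d + 1 by omega]
  have hΔ : ∀ i, ∏ j ∈ univ.erase i, (a i - a j) ≠ 0 := fun i =>
    prod_ne_zero_iff.mpr fun j hj => sub_ne_zero.mpr (ha.ne (ne_of_mem_erase hj).symm)
  constructor
  · rintro ⟨v, -, hself⟩ i
    have hvi := neg_eq_of_add_eq_zero_left ((egrsCode_subset_dualSet_iff ha v).mp hself.subset i)
    rw [neg_inv, inv_eq_iff_eq_inv] at hvi
    exact ⟨(v i)⁻¹, by rw [hvi, sq, mul_inv]⟩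
  · intro hsq
    choose r hr using hsq
    have hr0 : ∀ i, r i ≠ 0 := fun i hri => hΔ i (by simpa [hri] using hr i)
    refine ⟨fun i => (r i)⁻¹, fun i => inv_ne_zero (hr0 i), ?_⟩
    have hsub := (egrsCode_subset_dualSet_iff ha fun i => (r i)⁻¹).mpr fun i => by
      rw [neg_eq_iff_eq_neg.mp (hr i), inv_neg, ← sq, inv_pow, add_neg_cancel]
    rw [egrsCode_eq_map] at hsub ⊢
    refine coe_eq_dualSet_of_subset _ hsub ?_
    rw [finrank_map_egrsMap ha (fun i => inv_ne_zero (hr0 i)) (by omega)]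
    ring

theorem stmt_1 (p m : ℕ) (hp : p.Prime) (hodd : p ≠ 2) (hm : 0 < m)
    (F : Type*) [Field F] [Fintype F] [DecidableEq F] (hF : Fintype.card F = p ^ m)
    (n : ℕ) (hn1 : 1 ≤ n) (hnq : n ≤ p ^ m) (hne : Odd n)
    (a : Fin n → F) (ha : Function.Injective a) :
    (∃ v : Fin n → F, (∀ i, v i ≠ 0) ∧
        egrsCode a v ((n + 1) / 2) = dualSet (egrsCode a v ((n + 1) / 2))) ↔
      (∀ i : Fin n, IsSquare (-(∏ j ∈ Finset.univ.erase i, (a i - a j)))) :=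
  stmt_1_general F n hne a ha
end

section
/- Let p be an odd prime, r = p^m with m ≥ 1, and q = r². Then every even integer n with 2 ≤ n ≤ r − 1 belongs to Σ(g, q); that is, there exists a subset S of F_q with |S| = n such that the values η_q(Δ_S(a)) are the same for all a ∈ S. -/
open Finset

/-- Δ_S(a) = ∏_{b ∈ S, b ≠ a} (a − b). -/
def deltaS {F : Type*} [Field F] [DecidableEq F] (S : Finset F) (a : F) : F :=
  ∏ b ∈ S.erase a, (a - b)

/-- n ∈ Σ(g,q): n is even, n ≥ 2, and there is S ⊆ F_q with |S| = n such that
the quadratic-character values η_q(Δ_S(a)) agree for all a ∈ S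
(equivalently, the Δ_S(a) are all squares or all nonsquares). -/
def SigmaG (F : Type*) [Field F] [DecidableEq F] (n : ℕ) : Prop :=
  Even n ∧ 2 ≤ n ∧ ∃ S : Finset F, S.card = n ∧
    ((∀ a ∈ S, IsSquare (deltaS S a)) ∨ (∀ a ∈ S, ¬ IsSquare (deltaS S a)))

theorem stmt_2 (p m : ℕ) (hp : p.Prime) (hodd : p ≠ 2) (hm : 0 < m)
    (r : ℕ) (hr : r = p ^ m)
    (F : Type*) [Field F] [Fintype F] [DecidableEq F] (hF : Fintype.card F = r ^ 2)
    (n : ℕ) (hne : Even n) (hn2 : 2 ≤ n) (hnr : n ≤ r - 1) :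
    SigmaG F n := by
  have hp3 : 3 ≤ p := by
    rcases hp.two_le.lt_or_eq with h | h
    · omega
    · omega
  have hr3 : 3 ≤ r := by
    calc 3 ≤ p := hp3
    _ ≤ p ^ m := Nat.le_self_pow hm.ne' p
    _ = r := hr.symm
  -- char of F is p
  have hchar : CharP F p := by
    obtain ⟨p', hcp'⟩ := CharP.exists F
    haveI := hcp'
    obtain ⟨k, hp', hcard⟩ := FiniteField.card F p'
    have hpp : p = p' := by
      have h1 : p ∣ p' ^ (k : ℕ) := by
        rw [← hcard, hF, hr]
        exact Dvd.dvd.trans (dvd_pow_self p hm.ne') (dvd_pow_self _ (by positivity))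
      have := hp.dvd_of_dvd_pow h1
      exact ((Nat.prime_dvd_prime_iff_eq hp hp').mp this)
    rwa [hpp]
  haveI := hchar
  haveI : Fact p.Prime := ⟨hp⟩
  have hring : ringChar F = p := by rw [ringChar.eq F p]
  -- order of units group
  have hcardu : Fintype.card Fˣ = r ^ 2 - 1 := by rw [Fintype.card_units, hF]
  obtain ⟨g, hg⟩ := IsCyclic.exists_generator (α := Fˣ)
  have hog : orderOf g = r ^ 2 - 1 := by
    rw [orderOf_eq_card_of_forall_mem_zpowers hg, Nat.card_eq_fintype_card, hcardu]
  have hfact : r ^ 2 - 1 = (r - 1) * (r + 1) := by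
    obtain ⟨s, hs⟩ : ∃ s, r = s + 1 := ⟨r - 1, by omega⟩
    subst hs
    have h1 : (s + 1) ^ 2 = s ^ 2 + 2 * s + 1 := by ring
    have h2 : s * (s + 1 + 1) = s ^ 2 + 2 * s := by ring
    simp only [Nat.add_sub_cancel]
    omega
  set h := g ^ (r + 1) with hh
  have hdvd : r + 1 ∣ orderOf g := by rw [hog, hfact]; exact dvd_mul_left _ _
  have hoh : orderOf h = r - 1 := by
    rw [hh, orderOf_pow_of_dvd (by omega) hdvd, hog, hfact,
      Nat.mul_div_cancel _ (by omega)]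
  -- the set T0
  set T0 : Finset F := (Finset.range (r - 1)).image (fun i => ((h ^ i : Fˣ) : F)) with hT0
  have hcardT0 : T0.card = r - 1 := by
    rw [hT0, Finset.card_image_of_injOn, Finset.card_range]
    intro i hi j hj hij
    have : (h ^ i : Fˣ) = h ^ j := Units.ext hij
    exact pow_injOn_Iio_orderOf (by simpa [hoh] using Finset.mem_range.mp hi)
      (by simpa [hoh] using Finset.mem_range.mp hj) this
  have hTfix : ∀ x ∈ T0, x ^ r = x := by
    intro x hx
    rw [hT0, Finset.mem_image] at hx
    obtain ⟨i, _, rfl⟩ := hx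
    have h1 : (h ^ i : Fˣ) ^ (r - 1) = 1 := by
      rw [← pow_mul, pow_mul']
      rw [← hoh]
      simp [pow_orderOf_eq_one]
    have : (h ^ i : Fˣ) ^ r = h ^ i := by
      have : r = (r - 1) + 1 := by omega
      rw [this, pow_succ, h1, one_mul]
    calc ((h ^ i : Fˣ) : F) ^ r = (((h ^ i) ^ r : Fˣ) : F) := by push_cast; ring
    _ = ((h ^ i : Fˣ) : F) := by rw [this]
  obtain ⟨S, hST, hScard⟩ := Finset.exists_subset_card_eq (show n ≤ T0.card by omega)
  have hSfix : ∀ x ∈ S, x ^ r = x := fun x hx => hTfix x (hST hx)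
  refine ⟨hne, hn2, S, hScard, Or.inl ?_⟩
  intro a ha
  have hΔfix : deltaS S a ^ r = deltaS S a := by
    rw [deltaS, ← Finset.prod_pow]
    refine Finset.prod_congr rfl ?_
    intro b hb
    rw [hr, sub_pow_char_pow, ← hr, hSfix a ha, hSfix b (Finset.mem_of_mem_erase hb)]
  have hΔne : deltaS S a ≠ 0 := by
    rw [deltaS]
    refine Finset.prod_ne_zero_iff.mpr ?_
    intro b hb
    exact sub_ne_zero.mpr (Ne.symm (Finset.ne_of_mem_erase hb))
  have hΔ1 : deltaS S a ^ (r - 1) = 1 := by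
    have h2 : deltaS S a ^ (r - 1) * deltaS S a = 1 * deltaS S a := by
      rw [one_mul, ← pow_succ]
      have : r - 1 + 1 = r := by omega
      rw [this, hΔfix]
    exact mul_right_cancel₀ hΔne h2
  rw [FiniteField.isSquare_iff (by rw [hring]; exact_mod_cast hodd) hΔne]
  -- exponent arithmetic
  have hrodd : Odd r := by
    rw [hr]; exact (hp.odd_of_ne_two hodd).pow
  obtain ⟨k, hk⟩ := hrodd
  have hexp : Fintype.card F / 2 = (r - 1) * (k + 1) := by
    rw [hF]
    have : r ^ 2 = 4 * k ^ 2 + 4 * k + 1 := by rw [hk]; ring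
    rw [this]
    have hr1 : r - 1 = 2 * k := by omega
    rw [hr1]
    have : (4 * k ^ 2 + 4 * k + 1) / 2 = 2 * k ^ 2 + 2 * k := by omega
    rw [this]; ring
  rw [hexp, pow_mul, hΔ1, one_pow]
end

section
/- Let p be an odd prime, r = p^m with m ≥ 1, and q = r². Then every even integer n with 4 ≤ n ≤ r + 1 belongs to Σ(eg, q); that is, there exists a subset S of F_q with |S| = n − 1 such that η_q(−Δ_S(a)) = 1 for all a ∈ S. -/
/-!
Choose `S` inside the subfield `𝔽_r ⊆ 𝔽_{r²}`, which is possible as `n - 1 ≤ r`. Then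
every `-Δ_S(a)` lies in `𝔽_r`, and every element of `𝔽_r` is a square in `𝔽_{r²}`: it is a
norm `y ^ (r + 1)`, and `r + 1` is even unless the characteristic is `2`, where everything is
a square.
-/

open Finset

/-- n ∈ Σ(eg,q): n is even, n ≥ 2, and there is S ⊆ F_q with |S| = n − 1 such that
η_q(−Δ_S(a)) = 1, i.e. −Δ_S(a) is a square, for all a ∈ S. -/
def SigmaEG (F : Type*) [Field F] [DecidableEq F] (n : ℕ) : Prop :=
  Even n ∧ 2 ≤ n ∧ ∃ S : Finset F, S.card = n - 1 ∧
    ∀ a ∈ S, IsSquare (-(deltaS S a))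

theorem map_deltaS {K L : Type*} [Field K] [Field L] [DecidableEq K] [DecidableEq L]
    (σ : K →+* L) (S : Finset K) (a : K) :
    σ (deltaS S a) = deltaS (S.image σ) (σ a) := by
  rw [deltaS, deltaS, ← image_erase σ.injective, prod_image σ.injective.injOn, map_prod]
  simp only [map_sub]

theorem FiniteField.isSquare_map_of_card_eq_sq {K L : Type*} [Field K] [Field L] [Finite L]
    (σ : K →+* L) (hL : Nat.card L = Nat.card K ^ 2) (x : K) : IsSquare (σ x) := by
  let := σ.toAlgebra
  have := Fintype.ofFinite L
  have := Finite.of_injective _ σ.injective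
  by_cases hchar : ringChar L = 2
  · exact isSquare_of_char_two hchar _
  have hLodd : Odd (Nat.card L) := by
    rw [← Fintype.card_eq_nat_card, Nat.odd_iff]
    exact odd_card_of_char_ne_two hchar
  obtain ⟨k, hk⟩ : Odd (Nat.card K) := by
    rw [hL] at hLodd
    exact (Nat.odd_pow_iff two_ne_zero).mp hLodd
  have hk0 : k ≠ 0 := by
    have := Finite.one_lt_card (α := K)
    omega
  have hexp : (Nat.card L - 1) / (Nat.card K - 1) = 2 * (k + 1) := by
    rw [hL, hk, Nat.add_sub_cancel]
    exact Nat.div_eq_of_eq_mul_left (by omega) (Nat.sub_eq_of_eq_add (by ring))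
  obtain ⟨y, rfl⟩ := norm_surjective K L x
  refine ⟨y ^ (k + 1), ?_⟩
  rw [← RingHom.algebraMap_toAlgebra σ, algebraMap_norm_eq_pow, hexp]
  ring

theorem stmt_3_general (p m : ℕ) (hp : p.Prime) (hm : 0 < m)
    (r : ℕ) (hr : r = p ^ m)
    (F : Type*) [Field F] [Fintype F] [DecidableEq F] (hF : Fintype.card F = r ^ 2)
    (n : ℕ) (hne : Even n) (hn4 : 4 ≤ n) (hnr : n ≤ r + 1) :
    SigmaEG F n := by
  have := Fact.mk hp
  have hFp : Fintype.card F = p ^ (2 * m) := by rw [hF, hr, ← pow_mul, mul_comm]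
  have := charP_of_card_eq_prime_pow hFp
  let := ZMod.algebra F p
  have hrank : Module.finrank (ZMod p) F = 2 * m :=
    Nat.pow_right_injective hp.two_le <| show p ^ _ = p ^ _ by
      rw [FiniteField.pow_finrank_eq_card, hFp]
  obtain ⟨σ⟩ : Nonempty (GaloisField p m →ₐ[ZMod p] F) :=
    FiniteField.nonempty_algHom_of_finrank_dvd (by
      rw [GaloisField.finrank p hm.ne', hrank]; exact dvd_mul_left m 2)
  have hcard : Nat.card (GaloisField p m) = r := hr ▸ GaloisField.card p m hm.ne'
  have := Fintype.ofFinite (GaloisField p m)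
  obtain ⟨T, -, hT⟩ := exists_subset_card_eq (s := (univ : Finset (GaloisField p m)))
    (n := n - 1) (by rw [card_univ, Fintype.card_eq_nat_card, hcard]; omega)
  classical
  refine ⟨hne, by omega, T.image σ, (card_image_of_injective _ σ.toRingHom.injective).trans hT,
    fun a ha => ?_⟩
  obtain ⟨b, -, rfl⟩ := mem_image.mp ha
  have hsq := FiniteField.isSquare_map_of_card_eq_sq (σ : GaloisField p m →+* F)
    (by rw [hcard, ← Fintype.card_eq_nat_card, hF]) (-deltaS T b)
  rwa [map_neg, map_deltaS] at hsq

theorem stmt_3 (p m : ℕ) (hp : p.Prime) (hodd : p ≠ 2) (hm : 0 < m)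
    (r : ℕ) (hr : r = p ^ m)
    (F : Type*) [Field F] [Fintype F] [DecidableEq F] (hF : Fintype.card F = r ^ 2)
    (n : ℕ) (hne : Even n) (hn4 : 4 ≤ n) (hnr : n ≤ r + 1) :
    SigmaEG F n :=
  stmt_3_general p m hp hm r hr F hF n hne hn4 hnr
end

section
/- Let M be a finite nonempty subset of F_q and let g(x) ∈ F_q[x] be a monic polynomial of degree d ≥ 1 such that for each a ∈ M the set g^{-1}(a) = {b ∈ F_q : g(b) = a} has exactly d elements. Let S = ∪_{a ∈ M} g^{-1}(a). Then for every b ∈ S, with a = g(b) ∈ M, one has Δ_S(b) = Δ_M(a) · g′(b), where g′ is the formal derivative of g. -/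
open Finset Polynomial

theorem deltaS_eq_eval_derivative_nodal {F : Type*} [Field F] [DecidableEq F]
    {S : Finset F} {b : F} (hb : b ∈ S) :
    deltaS S b = (derivative (Lagrange.nodal S id)).eval b := by
  rw [← id_eq b, Lagrange.eval_nodal_derivative_eval_node_eq hb, Lagrange.eval_nodal, deltaS]
  rfl

theorem Polynomial.Monic.eq_nodal_of_card_eq {R : Type*} [CommRing R] [IsDomain R]
    {p : R[X]} (hp : p.Monic) {s : Finset R} (hroots : ∀ x ∈ s, p.IsRoot x)
    (hcard : #s = p.natDegree) : p = Lagrange.nodal s id := by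
  have hdvd : Lagrange.nodal s id ∣ p := by
    rw [Lagrange.nodal_eq, prod_eq_multiset_prod]
    refine (Multiset.prod_X_sub_C_dvd_iff_le_roots hp.ne_zero _).2 ?_
    rw [Multiset.le_iff_subset s.nodup]
    exact fun x hx => (mem_roots hp.ne_zero).2 (hroots x hx)
  exact eq_of_monic_of_dvd_of_natDegree_le Lagrange.nodal_monic hp hdvd
    (by rw [Lagrange.natDegree_nodal, hcard])

theorem Polynomial.Monic.sub_C_eq_nodal_fiber {R : Type*} [CommRing R] [IsDomain R] [Fintype R]
    [DecidableEq R] {g : R[X]} (hg : g.Monic) (hdeg : 0 < g.natDegree) {a : R}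
    (hcard : #(univ.filter fun b => g.eval b = a) = g.natDegree) :
    g - C a = Lagrange.nodal (univ.filter fun b => g.eval b = a) id := by
  have hmonic : (g - C a).Monic := hg.sub_of_left <| degree_C_le.trans_lt <| by
    rwa [degree_eq_natDegree hg.ne_zero, Nat.cast_pos]
  refine hmonic.eq_nodal_of_card_eq (fun x hx => ?_) (by rw [natDegree_sub_C, hcard])
  simp [(mem_filter.1 hx).2]

theorem nodal_biUnion_fiber_eq_nodal_comp {R : Type*} [CommRing R] [Fintype R] [DecidableEq R]
    {g : R[X]} {M : Finset R}
    (hfib : ∀ a ∈ M, g - C a = Lagrange.nodal (univ.filter fun b => g.eval b = a) id) :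
    Lagrange.nodal (M.biUnion fun a => univ.filter fun b => g.eval b = a) id =
      (Lagrange.nodal M id).comp g := by
  have hdisj : (M : Set R).PairwiseDisjoint fun a => univ.filter fun b => g.eval b = a := by
    intro a _ a' _ hne
    simp_rw [Function.onFun, disjoint_left, mem_filter]
    rintro c ⟨_, rfl⟩ ⟨_, rfl⟩
    exact hne rfl
  rw [Lagrange.nodal_eq, prod_biUnion hdisj, Lagrange.nodal_eq M, Polynomial.prod_comp]
  refine prod_congr rfl fun a ha => ?_
  rw [← Lagrange.nodal_eq, ← hfib a ha]
  simp

theorem stmt_5_general {F : Type*} [Field F] [Fintype F] [DecidableEq F]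
    (M : Finset F)
    (g : Polynomial F) (d : ℕ) (hmonic : g.Monic) (hdeg : g.natDegree = d)
    (hfib : ∀ a ∈ M, (Finset.univ.filter fun b : F => g.eval b = a).card = d)
    (S : Finset F) (hS : S = M.biUnion fun a => Finset.univ.filter fun b : F => g.eval b = a) :
    ∀ b ∈ S, deltaS S b = deltaS M (g.eval b) * (Polynomial.derivative g).eval b := by
  intro b hb
  obtain ⟨a, ha, hba⟩ := mem_biUnion.1 (hS ▸ hb)
  have hpos : 0 < g.natDegree := hdeg ▸ hfib a ha ▸ card_pos.2 ⟨b, hba⟩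
  have hnodal : Lagrange.nodal S id = (Lagrange.nodal M id).comp g := by
    rw [hS]
    exact nodal_biUnion_fiber_eq_nodal_comp fun a' ha' =>
      hmonic.sub_C_eq_nodal_fiber hpos (hdeg ▸ hfib a' ha')
  have hgb : g.eval b ∈ M := (mem_filter.1 hba).2 ▸ ha
  rw [deltaS_eq_eval_derivative_nodal hb, deltaS_eq_eval_derivative_nodal hgb, hnodal,
    derivative_comp, eval_mul, eval_comp, mul_comm]

theorem stmt_5 {F : Type*} [Field F] [Fintype F] [DecidableEq F]
    (M : Finset F) (hM : M.Nonempty)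
    (g : Polynomial F) (d : ℕ) (hd : 1 ≤ d) (hmonic : g.Monic) (hdeg : g.natDegree = d)
    (hfib : ∀ a ∈ M, (Finset.univ.filter fun b : F => g.eval b = a).card = d)
    (S : Finset F) (hS : S = M.biUnion fun a => Finset.univ.filter fun b : F => g.eval b = a) :
    ∀ b ∈ S, deltaS S b = deltaS M (g.eval b) * (Polynomial.derivative g).eval b :=
  stmt_5_general M g d hmonic hdeg hfib S hS
end

section
/- Let p be an odd prime, r = p^m, q = r², let 1 ≤ l ≤ m and d = gcd(l, m). Then for every even integer k with 2 ≤ k ≤ p^d, the number k·p^l belongs to Σ(g, q). -/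
open Finset

/-!
Let `K = 𝔽_{p^d}` with `d = gcd(l, m)`; it embeds in `F = 𝔽_q` since `d ∣ 2m`, and every element
of `K` is a square in `F` because `[F : K] = 2m/d` is even. Take a `K`-subspace `H ⊆ F` of
dimension `l/d` (so `|H| = p^l`), a vector `t ∉ H` and `U ⊆ K` with `|U| = k`, and let
`S = U • t + H`, a union of `k` cosets of `H`. Since `H` is stable under translation by its own
elements and under scaling by `Kˣ`, for `a = u • t + h ∈ S`
  `Δ_S(a) = Δ_H(0) · (∏_{b ∈ H} (t - b))^(k-1) · Δ_U(u)^|H|`,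
and the last factor is a nonzero square. So every `Δ_S(a)` is in the square class of one constant.
-/

open Pointwise

section Translates

variable {F : Type*} [Field F] [DecidableEq F]

theorem deltaS_union_of_mem_left {A B : Finset F} (hAB : Disjoint A B) {a : F} (ha : a ∈ A) :
    deltaS (A ∪ B) a = deltaS A a * ∏ b ∈ B, (a - b) := by
  rw [deltaS, erase_union_distrib, erase_eq_of_notMem (disjoint_left.mp hAB ha),
    prod_union (disjoint_of_subset_left (erase_subset a A) hAB), deltaS]

theorem deltaS_image_add_left (A : Finset F) (c a : F) :
    deltaS (A.image (c + ·)) (c + a) = deltaS A a := by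
  rw [deltaS, ← image_erase (add_right_injective c), prod_image (add_right_injective c).injOn,
    deltaS]
  simp only [add_sub_add_left_eq_sub]

theorem add_eq_biUnion_image_add_left (A B : Finset F) :
    A + B = A.biUnion fun a => B.image (a + ·) :=
  biUnion_image_left.symm

variable {G : Type*} [SetLike G F] [AddSubgroupClass G F] (H : G) [Fintype H]

theorem image_add_left_toFinset_of_mem {h : F} (hh : h ∈ H) :
    (H : Set F).toFinset.image (h + ·) = (H : Set F).toFinset := by
  ext x
  simp only [mem_image, Set.mem_toFinset, SetLike.mem_coe]
  exact ⟨fun ⟨b, hb, hbx⟩ => hbx ▸ add_mem hh hb,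
    fun hx => ⟨-h + x, add_mem (neg_mem hh) hx, add_neg_cancel_left h x⟩⟩

theorem deltaS_toFinset_of_mem {h : F} (hh : h ∈ H) :
    deltaS (H : Set F).toFinset h = deltaS (H : Set F).toFinset 0 := by
  conv_lhs => rw [← add_zero h, ← image_add_left_toFinset_of_mem H hh, deltaS_image_add_left]

theorem prod_add_sub_toFinset_of_mem (x : F) {h : F} (hh : h ∈ H) :
    ∏ b ∈ (H : Set F).toFinset, (x + h - b) = ∏ b ∈ (H : Set F).toFinset, (x - b) := by
  conv_lhs => rw [← image_add_left_toFinset_of_mem H hh, prod_image (add_right_injective h).injOn]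
  exact prod_congr rfl fun b _ => by ring

variable {H}

theorem disjoint_image_add_left_toFinset {a a' : F} (h : a - a' ∉ H) :
    Disjoint ((H : Set F).toFinset.image (a + ·)) ((H : Set F).toFinset.image (a' + ·)) := by
  simp only [disjoint_left, mem_image, Set.mem_toFinset, SetLike.mem_coe]
  rintro _ ⟨b, hb, rfl⟩ ⟨b', hb', hbb'⟩
  exact h (by rw [show a - a' = b' - b by linear_combination -hbb']; exact sub_mem hb' hb)

variable {T : Finset F} (hT : (T : Set F).Pairwise fun a a' => a - a' ∉ H)
include hT

theorem pairwiseDisjoint_image_add_left_toFinset :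
    (T : Set F).PairwiseDisjoint fun a => (H : Set F).toFinset.image (a + ·) :=
  hT.mono' fun _ _ => disjoint_image_add_left_toFinset

theorem card_add_toFinset : (T + (H : Set F).toFinset).card = T.card * Nat.card H := by
  rw [add_eq_biUnion_image_add_left, card_biUnion (pairwiseDisjoint_image_add_left_toFinset hT)]
  simp only [card_image_of_injective _ (add_right_injective _), sum_const, smul_eq_mul,
    Set.toFinset_card, Nat.card_eq_fintype_card]
  rfl

theorem deltaS_add_toFinset {a h : F} (ha : a ∈ T) (hh : h ∈ H) :
    deltaS (T + (H : Set F).toFinset) (a + h) = deltaS (H : Set F).toFinset 0 *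
      ∏ a' ∈ T.erase a, ∏ b ∈ (H : Set F).toFinset, (a - a' - b) := by
  have hdisj : Disjoint ((H : Set F).toFinset.image (a + ·))
      ((T.erase a).biUnion fun a' => (H : Set F).toFinset.image (a' + ·)) :=
    (disjoint_biUnion_right _ _ _).mpr fun a' ha' => disjoint_image_add_left_toFinset <|
      hT ha (mem_of_mem_erase ha') (ne_of_mem_erase ha').symm
  rw [add_eq_biUnion_image_add_left, ← insert_erase ha, biUnion_insert,
    erase_insert (notMem_erase a T),
    deltaS_union_of_mem_left hdisj (mem_image_of_mem _ (by simpa using hh)),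
    deltaS_image_add_left, deltaS_toFinset_of_mem H hh,
    prod_biUnion ((pairwiseDisjoint_image_add_left_toFinset hT).subset (erase_subset a T))]
  congr 1
  refine prod_congr rfl fun a' _ => ?_
  rw [prod_image (add_right_injective a').injOn, ← prod_add_sub_toFinset_of_mem H (a - a') hh]
  exact prod_congr rfl fun b _ => by ring

end Translates

theorem isSquare_mul_iff_of_isSquare {F : Type*} [CommGroupWithZero F] {c s : F}
    (hs : IsSquare s) (hs0 : s ≠ 0) : IsSquare (c * s) ↔ IsSquare c :=
  ⟨fun h => by simpa [hs0] using h.div hs, fun h => h.mul hs⟩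

theorem forall_isSquare_or_forall_not_of_eq_mul {F : Type*} [CommGroupWithZero F]
    {S : Finset F} {f : F → F} (c : F) (hf : ∀ a ∈ S, ∃ s, IsSquare s ∧ s ≠ 0 ∧ f a = c * s) :
    (∀ a ∈ S, IsSquare (f a)) ∨ ∀ a ∈ S, ¬IsSquare (f a) := by
  have key : ∀ a ∈ S, IsSquare (f a) ↔ IsSquare c := fun a ha => by
    obtain ⟨s, hs, hs0, hfa⟩ := hf a ha
    rw [hfa, isSquare_mul_iff_of_isSquare hs hs0]
  by_cases hc : IsSquare c
  · exact .inl fun a ha => (key a ha).mpr hc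
  · exact .inr fun a ha => mt (key a ha).mp hc

section Submodule

variable {K F : Type*} [Field K] [Field F] [DecidableEq F] [Algebra K F]
  (H : Submodule K F) [Fintype H]

theorem prod_smul_sub_toFinset {c : K} (hc : c ≠ 0) (x : F) :
    ∏ b ∈ (H : Set F).toFinset, (c • x - b) =
      algebraMap K F c ^ Nat.card H * ∏ b ∈ (H : Set F).toFinset, (x - b) := by
  have himage : (H : Set F).toFinset.image (c • ·) = (H : Set F).toFinset := by
    ext y
    simp only [mem_image, Set.mem_toFinset, SetLike.mem_coe]
    exact ⟨fun ⟨b, hb, hby⟩ => hby ▸ H.smul_mem c hb,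
      fun hy => ⟨c⁻¹ • y, H.smul_mem _ hy, smul_inv_smul₀ hc y⟩⟩
  conv_lhs => rw [← himage, prod_image (smul_right_injective F hc).injOn]
  simp only [Algebra.smul_def, ← mul_sub, prod_mul_distrib, prod_const, Set.toFinset_card,
    Nat.card_eq_fintype_card]
  rfl

theorem exists_card_eq_mul_natCard_and_deltaS_isSquare_or_not
    (hK : ∀ x : K, IsSquare (algebraMap K F x)) {t : F} (ht : t ∉ H) (U : Finset K) :
    ∃ S : Finset F, S.card = U.card * Nat.card H ∧
      ((∀ a ∈ S, IsSquare (deltaS S a)) ∨ ∀ a ∈ S, ¬IsSquare (deltaS S a)) := by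
  classical
  have hinj : Function.Injective (· • t : K → F) :=
    smul_left_injective K fun h0 => ht (h0 ▸ H.zero_mem)
  set T := U.image (· • t)
  have hT : (T : Set F).Pairwise fun a a' => a - a' ∉ H := by
    simp only [T, coe_image]
    rintro _ ⟨u, -, rfl⟩ _ ⟨u', -, rfl⟩ hne h
    have hu : u - u' ≠ 0 := sub_ne_zero.mpr fun h' => hne (h' ▸ rfl)
    exact ht ((H.smul_mem_iff hu).mp (by rwa [sub_smul]))
  refine ⟨T + (H : Set F).toFinset, ?_, ?_⟩
  · rw [card_add_toFinset hT, card_image_of_injective U hinj]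
  refine forall_isSquare_or_forall_not_of_eq_mul
    (deltaS (H : Set F).toFinset 0 * (∏ b ∈ (H : Set F).toFinset, (t - b)) ^ (U.card - 1))
    fun x hx => ?_
  obtain ⟨_, ha, h, hh, rfl⟩ := mem_add.mp hx
  obtain ⟨u, hu, rfl⟩ := mem_image.mp ha
  refine ⟨algebraMap K F (∏ u' ∈ U.erase u, (u - u')) ^ Nat.card H, (hK _).pow _,
    pow_ne_zero _ ((map_ne_zero _).mpr (prod_ne_zero_iff.mpr fun u' hu' =>
      sub_ne_zero.mpr (ne_of_mem_erase hu').symm)), ?_⟩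
  have hfactor : ∀ u' ∈ U.erase u, ∏ b ∈ (H : Set F).toFinset, (u • t - u' • t - b) =
      algebraMap K F (u - u') ^ Nat.card H * ∏ b ∈ (H : Set F).toFinset, (t - b) :=
    fun u' hu' => by
      rw [← sub_smul, prod_smul_sub_toFinset H (sub_ne_zero.mpr (ne_of_mem_erase hu').symm)]
  rw [deltaS_add_toFinset hT ha (by simpa using hh), ← image_erase hinj,
    prod_image hinj.injOn, prod_congr rfl hfactor, prod_mul_distrib, prod_const,
    card_erase_of_mem hu, map_prod, prod_pow]
  ring

end Submodule

theorem FiniteField.isSquare_algebraMap_of_even_finrank {K F : Type*} [Field K] [Finite K]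
    [Field F] [Fintype F] [Algebra K F] (hF : ringChar F ≠ 2) (hKF : Even (Module.finrank K F))
    (x : K) : IsSquare (algebraMap K F x) := by
  rcases eq_or_ne x 0 with rfl | hx
  · simp
  have := Fintype.ofFinite K
  obtain ⟨j, hj⟩ := hKF
  set y := algebraMap K F x
  set Q := Fintype.card K ^ j
  have hcard : Fintype.card F = Q ^ 2 := by
    rw [Module.card_eq_pow_finrank (K := K), hj, ← two_mul, pow_mul']
  have hy0 : y ≠ 0 := (map_ne_zero _).mpr hx
  have hyQ : y ^ (Q - 1) = 1 := by
    rw [pow_sub₀ y hy0 (Nat.one_le_pow _ _ Fintype.card_pos), ← map_pow,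
      FiniteField.pow_card_pow, pow_one, mul_inv_cancel₀ hy0]
  obtain ⟨s, hs⟩ : Odd Q := by
    have h := FiniteField.odd_card_of_char_ne_two hF
    rw [hcard] at h
    exact (Nat.odd_pow_iff two_ne_zero).mp (Nat.odd_iff.mpr h)
  have hhalf : Fintype.card F / 2 = (Q - 1) * (s + 1) := by
    rw [hcard, hs, show (2 * s + 1) ^ 2 = 2 * (2 * s * (s + 1)) + 1 by ring,
      Nat.mul_add_div two_pos, Nat.add_sub_cancel]
    simp
  rw [FiniteField.isSquare_iff hF hy0, hhalf, pow_mul, hyQ, one_pow]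

theorem Submodule.exists_finrank_eq {K V : Type*} [DivisionRing K] [AddCommGroup V] [Module K V]
    {n : ℕ} (hn : n ≤ Module.finrank K V) : ∃ H : Submodule K V, Module.finrank K H = n := by
  obtain ⟨f, hf⟩ := exists_linearIndependent_of_le_finrank hn
  exact ⟨span K (Set.range f), (finrank_span_eq_card hf).trans (Fintype.card_fin n)⟩

theorem sigmaG_mul_natCard_pow {K F : Type*} [Field K] [Finite K] [Field F] [Fintype F]
    [DecidableEq F] [Algebra K F] (hF : ringChar F ≠ 2) (hKF : Even (Module.finrank K F))
    {j : ℕ} (hj : j < Module.finrank K F) {k : ℕ} (hke : Even k) (hk1 : 2 ≤ k)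
    (hk2 : k ≤ Nat.card K) : SigmaG F (k * Nat.card K ^ j) := by
  refine ⟨hke.mul_right _, hk1.trans (Nat.le_mul_of_pos_right _ (pow_pos Nat.card_pos _)), ?_⟩
  obtain ⟨H, hH⟩ := Submodule.exists_finrank_eq hj.le
  obtain ⟨t, -, ht⟩ := SetLike.exists_of_lt
    (lt_top_iff_ne_top.mpr fun htop => (hH ▸ htop ▸ finrank_top K F).not_lt hj)
  have := Fintype.ofFinite K
  obtain ⟨U, -, hU⟩ := exists_subset_card_eq (s := (univ : Finset K)) (n := k)
    (by rwa [card_univ, ← Nat.card_eq_fintype_card])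
  have := Fintype.ofFinite H
  obtain ⟨S, hS, hSq⟩ := exists_card_eq_mul_natCard_and_deltaS_isSquare_or_not H
    (FiniteField.isSquare_algebraMap_of_even_finrank hF hKF) ht U
  exact ⟨S, by rw [hS, hU, Module.natCard_eq_pow_finrank (K := K) (V := H), hH], hSq⟩

theorem Module.finrank_mul_eq_of_natCard_eq_pow {K F : Type*} [Field K] [Field F] [Algebra K F]
    [Finite F] {p d e : ℕ} (hp : 2 ≤ p) (hK : Nat.card K = p ^ d) (hF : Nat.card F = p ^ e) :
    d * Module.finrank K F = e := by
  have : Module.Finite K F := .of_finite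
  refine Nat.pow_right_injective hp ?_
  simp only [pow_mul, ← hK, ← hF, Module.natCard_eq_pow_finrank (K := K) (V := F)]

theorem GaloisField.nonempty_ringHom_of_natCard_eq_pow {p d e : ℕ} [Fact p.Prime] {F : Type*}
    [Field F] [Finite F] [CharP F p] (hd : d ≠ 0) (hF : Nat.card F = p ^ e) (hde : d ∣ e) :
    Nonempty (GaloisField p d →+* F) := by
  let _ := ZMod.algebra F p
  obtain ⟨φ⟩ := FiniteField.nonempty_algHom_of_finrank_dvd (K := GaloisField p d) (L := F) <| by
    rwa [GaloisField.finrank p hd, ← one_mul (Module.finrank _ F),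
      Module.finrank_mul_eq_of_natCard_eq_pow (Fact.out : p.Prime).two_le (by simp) hF]
  exact ⟨φ⟩

theorem stmt_6_general (p m l : ℕ) (hp : p.Prime) (hodd : p ≠ 2)
    (hl1 : 1 ≤ l) (hl2 : l ≤ m)
    (r : ℕ) (hr : r = p ^ m)
    (F : Type*) [Field F] [Fintype F] [DecidableEq F] (hF : Fintype.card F = r ^ 2)
    (k : ℕ) (hke : Even k) (hk1 : 2 ≤ k) (hk2 : k ≤ p ^ Nat.gcd l m) :
    SigmaG F (k * p ^ l) := by
  set d := Nat.gcd l m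
  have hd : 0 < d := Nat.gcd_pos_of_pos_left m hl1
  have : Fact p.Prime := ⟨hp⟩
  have hcard : Nat.card F = p ^ (2 * m) := by
    rw [Nat.card_eq_fintype_card, hF, hr, ← pow_mul, mul_comm]
  have : CharP F p := charP_of_card_eq_prime_pow (Nat.card_eq_fintype_card.symm.trans hcard)
  obtain ⟨φ⟩ := GaloisField.nonempty_ringHom_of_natCard_eq_pow hd.ne' hcard
    (dvd_mul_of_dvd_right (Nat.gcd_dvd_right l m) 2)
  let _ := φ.toAlgebra
  have hdeg : Module.finrank (GaloisField p d) F = 2 * (m / d) := by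
    refine Nat.eq_of_mul_eq_mul_left hd ?_
    rw [Module.finrank_mul_eq_of_natCard_eq_pow hp.two_le (GaloisField.card p d hd.ne') hcard,
      mul_left_comm, Nat.mul_div_cancel' (Nat.gcd_dvd_right l m)]
  have hj : l / d < 2 * (m / d) := by
    have hm : 0 < m / d := Nat.div_pos ((Nat.gcd_le_left m hl1).trans hl2) hd
    have hlm : l / d ≤ m / d := Nat.div_le_div_right hl2
    omega
  have := sigmaG_mul_natCard_pow (K := GaloisField p d) (F := F) (by rwa [ringChar.eq F p])
    (hdeg ▸ even_two_mul _) (hdeg ▸ hj) hke hk1 (by rwa [GaloisField.card p d hd.ne'])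
  rwa [GaloisField.card p d hd.ne', ← pow_mul, Nat.mul_div_cancel' (Nat.gcd_dvd_left l m)] at this

theorem stmt_6 (p m l : ℕ) (hp : p.Prime) (hodd : p ≠ 2) (hm : 0 < m)
    (hl1 : 1 ≤ l) (hl2 : l ≤ m)
    (r : ℕ) (hr : r = p ^ m)
    (F : Type*) [Field F] [Fintype F] [DecidableEq F] (hF : Fintype.card F = r ^ 2)
    (k : ℕ) (hke : Even k) (hk1 : 2 ≤ k) (hk2 : k ≤ p ^ Nat.gcd l m) :
    SigmaG F (k * p ^ l) :=
  stmt_6_general p m l hp hodd hl1 hl2 r hr F hF k hke hk1 hk2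
end

section
/- Let p be an odd prime, r = p^m, q = r², let 1 ≤ l ≤ m and d = gcd(l, m). Then for every odd integer k with 1 ≤ k ≤ p^d, the number k·p^l + 1 belongs to Σ(eg, q). -/
open Finset

/-
Let `σ x = x ^ r`, the Frobenius of `F_{r²}` over `F_r`; it is an involution. Take `T ⊆ F_r`
with `k` elements, an additive subgroup `H` of order `p ^ l` of `{x | σ x = -x}`, and
`S = T + H`, of size `k p ^ l` because `2 ≠ 0`. For `a = t₀ + h₀ ∈ S` the affine map
`b ↦ σ b + 2 h₀` permutes `S \ {a}` and `a - (σ b + 2 h₀) = σ (a - b)`, so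
`σ (Δ_S(a)) = Δ_S(a)`: `-Δ_S(a)` lies in `F_r`, and every element of `F_r` is a square in
`F_{r²}`. Both `F_r` and `{x | σ x = -x}` have exactly `r` elements: `F` is their direct sum,
and each is contained in the roots of `X ^ r ∓ X`.
-/

open Function Pointwise

section Conjugation

variable {F : Type*} [Field F] [DecidableEq F] (σ : F →+* F)

theorem map_deltaS_eq_of_mapsTo {S : Finset F} {a c : F} (hfix : σ a + c = a)
    (hmaps : ∀ b ∈ S, σ b + c ∈ S) : σ (deltaS S a) = deltaS S a := by
  set g : F → F := fun b => σ b + c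
  have hg : Injective g := (add_left_injective c).comp σ.injective
  have hmaps' : Set.MapsTo g (S.erase a) (S.erase a) := fun b hb => by
    obtain ⟨hba, hbS⟩ := mem_erase.mp hb
    exact mem_erase.mpr ⟨fun h => hba (hg (h.trans hfix.symm)), hmaps b hbS⟩
  rw [deltaS, map_prod]
  refine prod_nbij g hmaps' hg.injOn (surjOn_of_injOn_of_card_le _ hmaps' hg.injOn le_rfl)
    fun b _ => ?_
  simp only [g, map_sub]
  linear_combination hfix

variable {σ} {T H : Finset F} (hT : ∀ t ∈ T, σ t = t) (hH : ∀ h ∈ H, σ h = -h)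
include hT hH

theorem card_add_of_fixed_of_antifixed (h2 : (2 : F) ≠ 0) : #(T + H) = #T * #H := by
  refine card_image₂_iff.mpr ?_
  rintro ⟨t, h⟩ hth ⟨t', h'⟩ hth' heq
  simp only [Set.mem_prod, mem_coe] at hth hth' heq
  have hd : t - t' = h' - h := by linear_combination heq
  have hfix : σ (h' - h) = h' - h := by rw [← hd, map_sub, hT t hth.1, hT t' hth'.1]
  rw [map_sub, hH h' hth'.2, hH h hth.2] at hfix
  have hh' : h' = h := by
    have : (2 : F) * (h' - h) = 0 := by linear_combination -hfix
    exact sub_eq_zero.mp ((mul_eq_zero.mp this).resolve_left h2)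
  subst hh'
  simpa using heq

theorem map_deltaS_add_eq (hsub : ∀ x ∈ H, ∀ y ∈ H, x - y ∈ H) {a : F}
    (ha : a ∈ T + H) :
    σ (deltaS (T + H) a) = deltaS (T + H) a := by
  obtain ⟨t₀, ht₀, h₀, hh₀, rfl⟩ := mem_add.mp ha
  refine map_deltaS_eq_of_mapsTo σ (c := h₀ + h₀) ?_ fun b hb => ?_
  · rw [map_add, hT t₀ ht₀, hH h₀ hh₀]
    ring
  · obtain ⟨t, ht, h, hh, rfl⟩ := mem_add.mp hb
    refine mem_add.mpr ⟨t, ht, h₀ - (h - h₀), hsub _ hh₀ _ (hsub _ hh _ hh₀), ?_⟩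
    rw [map_add, hT t ht, hH h hh]
    ring

theorem sigmaEG_card_mul_add_one (h2 : (2 : F) ≠ 0) (hsub : ∀ x ∈ H, ∀ y ∈ H, x - y ∈ H)
    (hsq : ∀ x, σ x = x → IsSquare x) (hodd : Odd (#T * #H)) : SigmaEG F (#T * #H + 1) := by
  refine ⟨hodd.add_one, by have := hodd.pos; omega, T + H,
    by rw [card_add_of_fixed_of_antifixed hT hH h2, Nat.add_sub_cancel], fun a ha => hsq _ ?_⟩
  rw [map_neg, map_deltaS_add_eq hT hH hsub ha]

end Conjugation

section Involution

variable {F : Type*} [Field F]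

def antifixedPoints (σ : F →+* F) : AddSubgroup F where
  carrier := {x | σ x = -x}
  add_mem' {a b} ha hb := by simp_all only [Set.mem_ofPred_eq, map_add, neg_add]
  zero_mem' := by simp
  neg_mem' {a} ha := by simp_all only [Set.mem_ofPred_eq, map_neg]

theorem mem_antifixedPoints {σ : F →+* F} {x : F} : x ∈ antifixedPoints σ ↔ σ x = -x :=
  Iff.rfl

theorem card_eq_card_fixedPoints_mul_card_antifixedPoints {σ : F →+* F} (hσ : Involutive σ)
    (h2 : (2 : F) ≠ 0) :
    Nat.card F = Nat.card (fixedPoints σ) * Nat.card (antifixedPoints σ) := by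
  rw [← Nat.card_prod]
  refine Nat.card_congr
    { toFun x := (⟨(x + σ x) / 2, ?_⟩, ⟨(x - σ x) / 2, ?_⟩)
      invFun y := y.1 + y.2
      left_inv x := by field_simp; ring
      right_inv := ?_ }
  · show σ _ = _
    rw [map_div₀, map_add, hσ x, map_ofNat, add_comm]
  · rw [mem_antifixedPoints, map_div₀, map_sub, hσ x, map_ofNat]
    ring
  · rintro ⟨⟨a, ha⟩, ⟨b, hb⟩⟩
    have ha' : σ a = a := ha
    rw [mem_antifixedPoints] at hb
    ext <;> simp only [map_add, ha', hb] <;> field_simp <;> ring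

end Involution

theorem AddSubgroup.exists_le_card_eq_pow_prime {G : Type*} [AddGroup G] [Finite G] {p n : ℕ}
    [Fact p.Prime] (E : AddSubgroup G) (h : p ^ n ∣ Nat.card E) :
    ∃ K ≤ E, Nat.card K = p ^ n := by
  obtain ⟨K, hK⟩ := Sylow.exists_subgroup_card_pow_prime (G := Multiplicative E) p h
  exact ⟨(Subgroup.toAddSubgroup' K).map E.subtype, AddSubgroup.map_subtype_le _,
    (AddSubgroup.card_subtype E _).trans hK⟩

section FiniteField

variable {F : Type*} [Field F] [Fintype F]

theorem card_pow_eq_mul_self_le {n : ℕ} (hn : 2 ≤ n) (c : F) :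
    Nat.card {x : F // x ^ n = c * x} ≤ n := by
  classical
  open Polynomial in
  set P : F[X] := X ^ n - C c * X
  have hdeg : P.natDegree = n := by
    rw [natDegree_sub_eq_left_of_natDegree_lt] <;> compute_degree!
  have hP : P ≠ 0 := ne_zero_of_natDegree_gt (hdeg ▸ (by omega : 0 < n))
  rw [Nat.card_eq_fintype_card, Fintype.card_subtype]
  refine (card_le_degree_of_subset_roots fun x hx => ?_).trans hdeg.le
  simp only [mem_val, mem_filter, mem_univ, true_and] at hx
  simp [mem_roots hP, P, hx]

theorem isSquare_of_pow_eq_self {r : ℕ} (hF : Fintype.card F = r ^ 2) (hr : Odd r)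
    {x : F} (hx : x ^ r = x) : IsSquare x := by
  rcases eq_or_ne x 0 with rfl | hx0
  · exact IsSquare.zero
  obtain ⟨s, rfl⟩ := hr
  have hcard : Fintype.card F = 2 * (2 * s * (s + 1)) + 1 := by rw [hF]; ring
  have hchar : ringChar F ≠ 2 := by
    rw [Ne, FiniteField.even_card_iff_char_two, hcard]
    omega
  have hunit : x ^ (2 * s) = 1 := by
    apply mul_right_cancel₀ hx0
    rw [← pow_succ, hx, one_mul]
  rw [FiniteField.isSquare_iff hchar hx0, hcard,
    show (2 * (2 * s * (s + 1)) + 1) / 2 = 2 * s * (s + 1) by omega, pow_mul, hunit, one_pow]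

variable {p : ℕ} [Fact p.Prime] [CharP F p] {m : ℕ}

theorem card_fixedPoints_and_antifixedPoints_iterateFrobenius
    (hF : Fintype.card F = (p ^ m) ^ 2) (hp : p ≠ 2) :
    Nat.card (fixedPoints (iterateFrobenius F p m)) = p ^ m ∧
      Nat.card (antifixedPoints (iterateFrobenius F p m)) = p ^ m := by
  have hσ : Involutive (iterateFrobenius F p m) := fun x => by
    rw [iterateFrobenius_def, iterateFrobenius_def, ← pow_mul, ← sq, ← hF,
      FiniteField.pow_card]
  have h2 : (2 : F) ≠ 0 := Ring.two_ne_zero (by rwa [ringChar.eq F p])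
  have hr : 2 ≤ p ^ m := by
    have := Fintype.one_lt_card (α := F)
    rw [hF, Nat.one_lt_pow_iff two_ne_zero] at this
    exact this
  have hfix : Nat.card (fixedPoints (iterateFrobenius F p m)) ≤ p ^ m := by
    refine le_of_eq_of_le (Nat.card_congr (Equiv.subtypeEquivRight fun x => ?_))
      (card_pow_eq_mul_self_le hr 1)
    rw [one_mul, ← iterateFrobenius_def]
    rfl
  have hanti : Nat.card (antifixedPoints (iterateFrobenius F p m)) ≤ p ^ m := by
    refine le_of_eq_of_le (Nat.card_congr (Equiv.subtypeEquivRight fun x => ?_))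
      (card_pow_eq_mul_self_le hr (-1))
    rw [neg_one_mul, ← iterateFrobenius_def]
    rfl
  have hprod := card_eq_card_fixedPoints_mul_card_antifixedPoints hσ h2
  rw [Nat.card_eq_fintype_card, hF] at hprod
  constructor <;> nlinarith

end FiniteField

theorem stmt_7_general (p m l : ℕ) (hp : p.Prime) (hodd : p ≠ 2)
    (hl2 : l ≤ m)
    (r : ℕ) (hr : r = p ^ m)
    (F : Type*) [Field F] [Fintype F] [DecidableEq F] (hF : Fintype.card F = r ^ 2)
    (k : ℕ) (hko : Odd k) (hk2 : k ≤ p ^ Nat.gcd l m) :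
    SigmaEG F (k * p ^ l + 1) := by
  classical
  subst hr
  have : Fact p.Prime := ⟨hp⟩
  have : CharP F p := charP_of_card_eq_prime_pow (f := 2 * m) (by rw [hF, ← pow_mul, mul_comm])
  set σ := iterateFrobenius F p m
  obtain ⟨hfix, hanti⟩ := card_fixedPoints_and_antifixedPoints_iterateFrobenius hF hodd
  have hkr : k ≤ p ^ m := by
    refine hk2.trans (Nat.pow_le_pow_right hp.pos ?_)
    rcases m.eq_zero_or_pos with rfl | hm
    · simpa using hl2
    · exact Nat.gcd_le_right _ hm
  obtain ⟨T, hT, rfl⟩ := exists_subset_card_eq (n := k) (s := (fixedPoints σ).toFinset)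
    (by rwa [← Nat.card_eq_card_toFinset, hfix])
  obtain ⟨K, hKE, hK⟩ := (antifixedPoints σ).exists_le_card_eq_pow_prime (n := l)
    (hanti ▸ pow_dvd_pow p hl2)
  have hH : #(K : Set F).toFinset = p ^ l := by rw [← Nat.card_eq_card_toFinset]; exact hK
  rw [← hH]
  refine sigmaEG_card_mul_add_one (fun t ht => (Set.mem_toFinset (s := fixedPoints σ)).mp (hT ht))
    (fun h hh => hKE (Set.mem_toFinset.mp hh)) (Ring.two_ne_zero (by rwa [ringChar.eq F p]))
    (fun x hx y hy => ?_) (fun x hx => isSquare_of_pow_eq_self hF (hp.odd_of_ne_two hodd).pow ?_)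
    (by rw [hH]; exact hko.mul (hp.odd_of_ne_two hodd).pow)
  · simp only [Set.mem_toFinset, SetLike.mem_coe] at hx hy ⊢
    exact K.sub_mem hx hy
  · rwa [← iterateFrobenius_def]

theorem stmt_7 (p m l : ℕ) (hp : p.Prime) (hodd : p ≠ 2) (hm : 0 < m)
    (hl1 : 1 ≤ l) (hl2 : l ≤ m)
    (r : ℕ) (hr : r = p ^ m)
    (F : Type*) [Field F] [Fintype F] [DecidableEq F] (hF : Fintype.card F = r ^ 2)
    (k : ℕ) (hko : Odd k) (hk1 : 1 ≤ k) (hk2 : k ≤ p ^ Nat.gcd l m) :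
    SigmaEG F (k * p ^ l + 1) :=
  stmt_7_general p m l hp hodd hl2 r hr F hF k hko hk2
end

section
/- Let r be a power of an odd prime p, q = r², write q − 1 = e·f, and set R = (r+1)/gcd(r+1, f). Suppose t and f are such that t·f is even, 1 ≤ t ≤ R, and e is even. Then t·f belongs to Σ(g, q). -/
/-!
Let `r = p ^ m`, `q = r ^ 2`, let `β` generate the norm-one subgroup `μ_{r+1}` of `𝔽_q^*`, and
put `ω = β ^ f`, of order `R = (r + 1) / gcd (r + 1, f)`. Take for `S` the `f`-th roots of
`1, ω, …, ω ^ (t - 1)`; since `t ≤ R` these are `t` distinct elements, each with `f` distinct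
`f`-th roots in `𝔽_q`, so `|S| = t f` and `∏_{b ∈ S} (X - b) = H (X ^ f)` with
`H = ∏_{i < t} (X - ω ^ i)`. Differentiating, `Δ_S(a) = f a ^ (f - 1) Δ_D(a ^ f)` for the set `D`
of the `ω ^ i`.

Every `a ∈ S` is of the form `ζ ^ l β ^ j` with `ζ` a primitive `f`-th root of unity, hence a
square because `e` is even. On `μ_{r+1}` the Frobenius `x ↦ x ^ r` is inversion, which gives
`(x - y) ^ (r - 1) = -(x y) ^ r`, so `η(ω ^ j - ω ^ i) = (-1) ^ ((r + 1) / 2) ε_i ε_j` with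
`ε_i = (-1) ^ (f i)`. Hence `η(Δ_S(a)) = η(f) (-1) ^ ((r + 1) (t - 1) / 2) ε_j ^ t ∏_i ε_i`, and
`ε_j ^ t = 1` because `t f` is even: the character does not depend on `a`.
-/

open Finset

open Polynomial

theorem Finset.image_erase_of_injOn {ι κ : Type*} [DecidableEq ι] [DecidableEq κ]
    {s : Finset ι} {φ : ι → κ} (hφ : Set.InjOn φ s) {j : ι} (hj : j ∈ s) :
    (s.image φ).erase (φ j) = (s.erase j).image φ := by
  ext b
  simp only [mem_erase, mem_image]
  constructor
  · rintro ⟨hb, i, hi, rfl⟩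
    exact ⟨i, ⟨fun h => hb (h ▸ rfl), hi⟩, rfl⟩
  · rintro ⟨i, ⟨hij, hi⟩, rfl⟩
    exact ⟨fun h => hij (hφ hi hj h), i, hi, rfl⟩

theorem prod_erase_pow_mul_pow {M : Type*} [CommMonoid M] {s : M} (hs : s ^ 2 = 1)
    {t j : ℕ} (hj : j < t) (hst : s ^ t = 1) :
    ∏ i ∈ (range t).erase j, s ^ i * s ^ j = ∏ i ∈ range t, s ^ i := by
  rw [prod_mul_distrib, prod_const, card_erase_of_mem (mem_range.mpr hj), card_range,
    ← mul_prod_erase _ _ (mem_range.mpr hj), mul_comm]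
  congr 1
  obtain ⟨u, rfl⟩ : ∃ u, t = u + 1 := ⟨t - 1, by omega⟩
  have h1 : s ^ (j * u) * s ^ j = 1 := by
    rw [← pow_add, ← mul_add_one, mul_comm, pow_mul, hst, one_pow]
  have h2 : s ^ j * s ^ j = 1 := by rw [← pow_add, ← two_mul, pow_mul, hs, one_pow]
  rw [Nat.add_sub_cancel, ← pow_mul]
  calc s ^ (j * u) = s ^ (j * u) * s ^ j * s ^ j := by rw [mul_assoc, h2, mul_one]
    _ = s ^ j := by rw [h1, one_mul]

theorem Nat.sq_div_two_of_odd {r : ℕ} (hr : Odd r) : r ^ 2 / 2 = (r - 1) * ((r + 1) / 2) := by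
  obtain ⟨s, rfl⟩ := hr
  rw [show (2 * s + 1 + 1) / 2 = s + 1 by omega, Nat.add_sub_cancel,
    show (2 * s + 1) ^ 2 = 2 * (2 * s * (s + 1)) + 1 by ring]
  omega

theorem IsPrimitiveRoot.pow_div_gcd {M : Type*} [CommMonoid M] {ζ : M} {k n : ℕ}
    (h : IsPrimitiveRoot ζ k) (hn : n ≠ 0) : IsPrimitiveRoot (ζ ^ n) (k / k.gcd n) := by
  rw [h.eq_orderOf, ← orderOf_pow' ζ hn]
  exact IsPrimitiveRoot.orderOf _

theorem FiniteField.exists_isPrimitiveRoot_card_sub_one (K : Type*) [Field K] [Fintype K] :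
    ∃ G : K, IsPrimitiveRoot G (Fintype.card K - 1) := by
  obtain ⟨g, hg⟩ := IsCyclic.exists_ofOrder_eq_natCard (α := Kˣ)
  rw [Nat.card_units, Nat.card_eq_fintype_card] at hg
  exact ⟨g, IsPrimitiveRoot.coe_units_iff.mpr (hg ▸ IsPrimitiveRoot.orderOf g)⟩

section DeltaS

variable {K : Type*} [Field K] [DecidableEq K]

theorem deltaS_ne_zero {S : Finset K} {a : K} : deltaS S a ≠ 0 :=
  prod_ne_zero_iff.mpr fun _ hb => sub_ne_zero.mpr (ne_of_mem_erase hb).symm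

theorem deltaS_image {ι : Type*} [DecidableEq ι] {s : Finset ι} {φ : ι → K}
    (hφ : Set.InjOn φ s) {j : ι} (hj : j ∈ s) :
    deltaS (s.image φ) (φ j) = ∏ i ∈ s.erase j, (φ j - φ i) := by
  rw [deltaS, image_erase_of_injOn hφ hj, prod_image (hφ.mono (by simp))]

theorem deltaS_eq_eval_derivative {S : Finset K} {a : K} (ha : a ∈ S) :
    deltaS S a = eval a (derivative (∏ b ∈ S, (X - C b))) := by
  rw [prod_eq_multiset_prod, eval_multiset_prod_X_sub_C_derivative ha, deltaS,
    prod_eq_multiset_prod, erase_val]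

theorem deltaS_eq_mul_deltaS_pow {S D : Finset K} {n : ℕ}
    (hS : ∏ b ∈ S, (X - C b) = ∏ d ∈ D, (X ^ n - C d)) {a : K} (ha : a ∈ S) :
    deltaS S a = n * a ^ (n - 1) * deltaS D (a ^ n) := by
  have hcomp : ∏ d ∈ D, (X ^ n - C d) = (∏ d ∈ D, (X - C d)).comp (X ^ n) := by
    simp [Polynomial.prod_comp]
  have haD : a ^ n ∈ D := by
    have h := congrArg (eval a) hS
    rw [eval_prod, prod_eq_zero ha (by simp), eq_comm, eval_prod, prod_eq_zero_iff] at h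
    obtain ⟨d, hd, had⟩ := h
    simp only [eval_sub, eval_pow, eval_X, eval_C, sub_eq_zero] at had
    exact had ▸ hd
  rw [deltaS_eq_eval_derivative ha, hS, hcomp, derivative_comp, eval_mul, eval_comp,
    eval_pow, eval_X, ← deltaS_eq_eval_derivative haD, derivative_X_pow]
  simp

theorem sigmaG_card_of_pow_card_div_two_eq [Fintype K] (hK : ringChar K ≠ 2) {S : Finset K}
    (heven : Even #S) (htwo : 2 ≤ #S) {V : K}
    (hV : ∀ a ∈ S, deltaS S a ^ (Fintype.card K / 2) = V) : SigmaG K #S := by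
  refine ⟨heven, htwo, S, rfl, ?_⟩
  simp only [FiniteField.isSquare_iff hK deltaS_ne_zero]
  by_cases h : V = 1
  · exact .inl fun a ha => (hV a ha).trans h
  · exact .inr fun a ha => (hV a ha).trans_ne h

end DeltaS

section RootsOfPowers

variable {K : Type*} [Field K] [Fintype K] [DecidableEq K] {n : ℕ} {ζ : K}

theorem filter_pow_eq_pow_eq_image (hζ : IsPrimitiveRoot ζ n) (hn : 0 < n) (α : K) :
    ({b | b ^ n = α ^ n} : Finset K) = (range n).image (fun i => ζ ^ i * α) := by
  ext b
  rw [mem_filter_univ, ← mem_nthRoots hn, hζ.nthRoots_eq rfl, mem_image]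
  simp [Multiset.mem_map, Multiset.mem_range]

theorem prod_X_sub_C_filter_pow_eq (hζ : IsPrimitiveRoot ζ n) (hn : 0 < n) {α : K}
    (hα : α ≠ 0) : ∏ b ∈ ({b | b ^ n = α ^ n} : Finset K), (X - C b) = X ^ n - C (α ^ n) := by
  rw [filter_pow_eq_pow_eq_image hζ hn, prod_image (hζ.injOn_pow_mul hα),
    X_pow_sub_C_eq_prod hζ hn rfl]

theorem card_filter_pow_eq (hζ : IsPrimitiveRoot ζ n) (hn : 0 < n) {α : K} (hα : α ≠ 0) :
    #({b | b ^ n = α ^ n} : Finset K) = n := by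
  rw [filter_pow_eq_pow_eq_image hζ hn, card_image_of_injOn (hζ.injOn_pow_mul hα), card_range]

theorem filter_pow_mem_and_pow_eq {D : Finset K} {d : K} (hd : d ∈ D) :
    ({b | b ^ n ∈ D ∧ b ^ n = d} : Finset K) = ({b | b ^ n = d} : Finset K) :=
  filter_congr fun _ _ => and_iff_right_of_imp fun h => h ▸ hd

variable (hζ : IsPrimitiveRoot ζ n) (hn : 0 < n) {D : Finset K}
  (hD : ∀ d ∈ D, ∃ α ≠ 0, α ^ n = d)
include hζ hn hD

theorem prod_X_sub_C_filter_pow_mem :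
    ∏ b ∈ ({b | b ^ n ∈ D} : Finset K), (X - C b) = ∏ d ∈ D, (X ^ n - C d) := by
  rw [← prod_fiberwise_of_maps_to (g := (· ^ n)) (t := D) fun _ hb => by simpa using hb]
  refine prod_congr rfl fun d hd => ?_
  obtain ⟨α, hα, rfl⟩ := hD d hd
  rw [filter_filter, filter_pow_mem_and_pow_eq hd, prod_X_sub_C_filter_pow_eq hζ hn hα]

theorem card_filter_pow_mem : #({b | b ^ n ∈ D} : Finset K) = n * #D := by
  rw [card_eq_sum_card_fiberwise (f := (· ^ n)) (t := D) fun _ hb => by simpa using hb,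
    sum_congr rfl fun d hd => ?_, sum_const, smul_eq_mul, mul_comm]
  obtain ⟨α, hα, rfl⟩ := hD d hd
  rw [filter_filter, filter_pow_mem_and_pow_eq hd, card_filter_pow_eq hζ hn hα]

end RootsOfPowers

section Construction

variable {K : Type*} [Field K] [Fintype K] [DecidableEq K]

def rootsOfPowers (n t : ℕ) (β : K) : Finset K :=
  {b | b ^ n ∈ (range t).image ((β ^ n) ^ ·)}

omit [Fintype K] in
theorem exists_pow_eq_of_mem_image_pow {β : K} (hβ : β ≠ 0) {n t : ℕ} :
    ∀ d ∈ (range t).image ((β ^ n) ^ ·), ∃ α ≠ 0, α ^ n = d := by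
  simp only [mem_image]
  rintro _ ⟨j, -, rfl⟩
  exact ⟨β ^ j, pow_ne_zero j hβ, by rw [← pow_mul, ← pow_mul, mul_comm]⟩

variable {f t : ℕ} {ζ β : K} (hζ : IsPrimitiveRoot ζ f) (hf : 0 < f)
include hζ hf

theorem mem_rootsOfPowers_iff {a : K} :
    a ∈ rootsOfPowers f t β ↔ ∃ j < t, ∃ l < f, ζ ^ l * β ^ j = a := by
  simp_rw [rootsOfPowers, mem_filter_univ, mem_image, mem_range, ← pow_mul, mul_comm f, pow_mul]
  refine exists_congr fun j => and_congr_right fun _ => ?_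
  rw [eq_comm, ← mem_filter_univ (p := (· ^ f = (β ^ j) ^ f)), filter_pow_eq_pow_eq_image hζ hf]
  simp

variable (hβ : β ≠ 0) (hinj : Set.InjOn ((β ^ f) ^ ·) (range t))
include hβ hinj

theorem card_rootsOfPowers : #(rootsOfPowers f t β) = f * t := by
  rw [rootsOfPowers, card_filter_pow_mem hζ hf (exists_pow_eq_of_mem_image_pow hβ),
    card_image_of_injOn hinj, card_range]

theorem deltaS_rootsOfPowers {a : K} (ha : a ∈ rootsOfPowers f t β) {j : ℕ} (hj : j < t)
    (haj : a ^ f = (β ^ f) ^ j) :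
    deltaS (rootsOfPowers f t β) a =
      f * a ^ (f - 1) * ∏ i ∈ (range t).erase j, ((β ^ f) ^ j - (β ^ f) ^ i) := by
  rw [rootsOfPowers] at ha ⊢
  rw [deltaS_eq_mul_deltaS_pow
    (prod_X_sub_C_filter_pow_mem hζ hf (exists_pow_eq_of_mem_image_pow hβ)) ha,
    haj, deltaS_image hinj (mem_range.mpr hj)]

end Construction

section NormOne

variable {K : Type*} [Field K] {p m : ℕ} [ExpChar K p]

theorem sub_pow_char_pow_sub_one {x y : K} (hx : x ^ (p ^ m + 1) = 1)
    (hy : y ^ (p ^ m + 1) = 1) (hxy : x ≠ y) : (x - y) ^ (p ^ m - 1) = -(x * y) ^ p ^ m := by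
  refine mul_right_cancel₀ (sub_ne_zero.mpr hxy) ?_
  rw [← pow_succ, Nat.sub_add_cancel (Nat.one_le_pow _ _ (expChar_pos K p)),
    sub_pow_expChar_pow]
  -- On `μ_{p^m+1}` the Frobenius is inversion: `x ^ p ^ m = x⁻¹`.
  linear_combination (y ^ p ^ m) * hx - x ^ p ^ m * hy

variable (hodd : Odd (p ^ m))
include hodd

theorem sub_pow_sub_one_mul_half {x y : K} (hx : x ^ (p ^ m + 1) = 1)
    (hy : y ^ (p ^ m + 1) = 1) (hxy : x ≠ y) :
    (x - y) ^ ((p ^ m - 1) * ((p ^ m + 1) / 2)) =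
      (-1) ^ ((p ^ m + 1) / 2) * (x * y) ^ ((p ^ m + 1) / 2) := by
  obtain ⟨s, hs⟩ := hodd
  have hxy1 : (x * y) ^ (p ^ m + 1) = 1 := by rw [mul_pow, hx, hy, one_mul]
  rw [pow_mul, sub_pow_char_pow_sub_one hx hy hxy, neg_pow, ← pow_mul, hs,
    show (2 * s + 1 + 1) / 2 = s + 1 by omega,
    show (2 * s + 1) * (s + 1) = s + 1 + (2 * s + 1 + 1) * s by ring, pow_add (x * y),
    pow_mul (x * y), ← hs, hxy1, one_pow, mul_one]

variable {β : K} (hβ : IsPrimitiveRoot β (p ^ m + 1))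
include hβ

theorem IsPrimitiveRoot.pow_sub_pow_pow_sub_one_mul_half {a b : ℕ} (hab : β ^ a ≠ β ^ b) :
    (β ^ a - β ^ b) ^ ((p ^ m - 1) * ((p ^ m + 1) / 2)) =
      (-1) ^ ((p ^ m + 1) / 2) * (-1) ^ (a + b) := by
  have hβpow : ∀ c, (β ^ c) ^ (p ^ m + 1) = 1 := fun c => by
    rw [← pow_mul, mul_comm, pow_mul, hβ.pow_eq_one, one_pow]
  have hhalf : β ^ ((p ^ m + 1) / 2) = -1 :=
    (hβ.pow (by omega) (by obtain ⟨s, hs⟩ := hodd; omega)).eq_neg_one_of_two_right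
  rw [sub_pow_sub_one_mul_half hodd (hβpow a) (hβpow b) hab, ← pow_add, ← pow_mul,
    mul_comm (a + b), pow_mul, hhalf, mul_comm]

theorem prod_erase_pow_sub_pow_pow_sub_one_mul_half {f t j : ℕ}
    (hinj : Set.InjOn ((β ^ f) ^ ·) (range t)) (htf : Even (t * f)) (hj : j < t) :
    ∏ i ∈ (range t).erase j, ((β ^ f) ^ j - (β ^ f) ^ i) ^ ((p ^ m - 1) * ((p ^ m + 1) / 2)) =
      ((-1) ^ ((p ^ m + 1) / 2)) ^ (t - 1) * ∏ i ∈ range t, ((-1 : K) ^ f) ^ i := by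
  have hterm : ∀ i ∈ (range t).erase j,
      ((β ^ f) ^ j - (β ^ f) ^ i) ^ ((p ^ m - 1) * ((p ^ m + 1) / 2)) =
        (-1) ^ ((p ^ m + 1) / 2) * (((-1 : K) ^ f) ^ i * ((-1 : K) ^ f) ^ j) := fun i hi => by
    have hij : (β ^ f) ^ j ≠ (β ^ f) ^ i := fun h =>
      ne_of_mem_erase hi (hinj (mem_erase.mp hi).2 (mem_range.mpr hj) h.symm)
    simp only [← pow_mul] at hij ⊢
    rw [hβ.pow_sub_pow_pow_sub_one_mul_half hodd hij]
    ring
  rw [prod_congr rfl hterm, prod_mul_distrib, prod_const, card_erase_of_mem (mem_range.mpr hj),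
    card_range, prod_erase_pow_mul_pow (by rw [← pow_mul, Even.neg_one_pow ⟨f, by ring⟩]) hj
      (by rw [← pow_mul, mul_comm, htf.neg_one_pow])]

end NormOne

theorem pow_card_div_two_deltaS_rootsOfPowers {K : Type*} [Field K] [Fintype K]
    [DecidableEq K] {p m : ℕ} [ExpChar K p] (hodd : Odd (p ^ m))
    (hK : Fintype.card K = (p ^ m) ^ 2) {f t : ℕ} {ζ β : K} (hζ : IsPrimitiveRoot ζ f)
    (hf : 0 < f) (hfK : f ∣ Fintype.card K / 2) (hβ : IsPrimitiveRoot β (p ^ m + 1))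
    (hinj : Set.InjOn ((β ^ f) ^ ·) (range t)) (htf : Even (t * f)) :
    ∀ a ∈ rootsOfPowers f t β, deltaS (rootsOfPowers f t β) a ^ (Fintype.card K / 2) =
      (f : K) ^ (Fintype.card K / 2) * ((-1) ^ ((p ^ m + 1) / 2)) ^ (t - 1) *
        ∏ i ∈ range t, ((-1 : K) ^ f) ^ i := by
  intro a ha
  obtain ⟨j, hj, l, -, rfl⟩ := (mem_rootsOfPowers_iff hζ hf).mp ha
  have hcard : Fintype.card K / 2 = (p ^ m - 1) * ((p ^ m + 1) / 2) := by
    rw [hK, Nat.sq_div_two_of_odd hodd]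
  have hβK : p ^ m + 1 ∣ Fintype.card K / 2 := by
    obtain ⟨s, hs⟩ := hodd
    exact hcard ▸ ⟨s, by
      rw [hs, Nat.add_sub_cancel, show (2 * s + 1 + 1) / 2 = s + 1 by omega]; ring⟩
  have hpow : (ζ ^ l * β ^ j) ^ f = (β ^ f) ^ j := by
    rw [mul_pow, ← pow_mul, mul_comm l, pow_mul, hζ.pow_eq_one, one_pow, one_mul, ← pow_mul,
      ← pow_mul, mul_comm]
  have hsq : (ζ ^ l * β ^ j) ^ (Fintype.card K / 2) = 1 := by
    rw [mul_pow, ← pow_mul, ← pow_mul, mul_comm l, mul_comm j, pow_mul, pow_mul β,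
      (hζ.pow_eq_one_iff_dvd _).mpr hfK, (hβ.pow_eq_one_iff_dvd _).mpr hβK, one_pow, one_pow,
      one_mul]
  rw [deltaS_rootsOfPowers hζ hf (hβ.ne_zero (by omega)) hinj ha hj hpow, mul_pow, mul_pow,
    ← pow_mul (ζ ^ l * β ^ j), mul_comm (f - 1), pow_mul, hsq, one_pow, mul_one, ← prod_pow,
    hcard, prod_erase_pow_sub_pow_pow_sub_one_mul_half hodd hβ hinj htf hj, mul_assoc]

theorem stmt_10 (p m : ℕ) (hp : p.Prime) (hodd : p ≠ 2) (hm : 0 < m)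
    (r : ℕ) (hr : r = p ^ m)
    (F : Type*) [Field F] [Fintype F] [DecidableEq F] (hF : Fintype.card F = r ^ 2)
    (e f t : ℕ) (hef : r ^ 2 - 1 = e * f)
    (htf : Even (t * f)) (ht1 : 1 ≤ t) (ht2 : t ≤ (r + 1) / Nat.gcd (r + 1) f)
    (he : Even e) :
    SigmaG F (t * f) := by
  subst hr
  have : Fact p.Prime := ⟨hp⟩
  have : CharP F p := charP_of_card_eq_prime_pow (hF.trans (pow_mul p m 2).symm)
  have hrodd : Odd (p ^ m) := (hp.odd_of_ne_two hodd).pow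
  have hr1 : 1 < (p ^ m) ^ 2 := Nat.one_lt_pow two_ne_zero (Nat.one_lt_pow hm.ne' hp.one_lt)
  have hef0 : 0 < e * f := hef ▸ Nat.sub_pos_of_lt hr1
  have hf : 0 < f := Nat.pos_of_mul_pos_left hef0
  obtain ⟨G, hG⟩ := FiniteField.exists_isPrimitiveRoot_card_sub_one F
  rw [hF, hef] at hG
  have hζ : IsPrimitiveRoot (G ^ e) f := hG.pow hef0 rfl
  have hβ : IsPrimitiveRoot (G ^ (p ^ m - 1)) (p ^ m + 1) :=
    hG.pow hef0 (by rw [← hef, mul_comm]; simpa using Nat.sq_sub_sq (p ^ m) 1)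
  have hinj : Set.InjOn (((G ^ (p ^ m - 1)) ^ f) ^ ·) (range t) :=
    (hβ.pow_div_gcd hf.ne').injOn_pow.mono (by simpa using ht2)
  have hfF : f ∣ Fintype.card F / 2 := by
    obtain ⟨k, rfl⟩ := he
    exact ⟨k, by rw [hF]; rw [show (k + k) * f = 2 * (f * k) by ring] at hef; omega⟩
  have hV := pow_card_div_two_deltaS_rootsOfPowers hrodd hF hζ hf hfF hβ hinj htf
  have htwo : 2 ≤ t * f := by
    obtain ⟨k, hk⟩ := htf
    have := Nat.mul_pos ht1 hf
    omega
  rw [mul_comm, ← card_rootsOfPowers hζ hf (hβ.ne_zero (by omega)) hinj] at htf htwo ⊢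
  exact sigmaG_card_of_pow_card_div_two_eq (ringChar.eq F p ▸ hodd) htf htwo hV
end

section
/- Let r be a power of an odd prime p, q = r², write q − 1 = e·f, let s be an even integer with s | f and 2s | r + 1, and set D = s(r−1)/gcd(s(r−1), f). Then for every t with 1 ≤ t ≤ D, the number t·f + 2 belongs to Σ(eg, q); moreover, if e is even, then t·f belongs to Σ(g, q). -/
open Finset

/-!
Choose a set `T` of `t` distinct `D`-th roots of unity in `F = 𝔽_{r²}`. Since `D ∣ r - 1` they
lie in the subfield `𝔽_r`, and since `D ∣ e` each of them is an `f`-th power, so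
`S = {x | x ^ f ∈ T}` is a union of `t` cosets of the `f`-th roots of unity and has `t f`
elements. Its vanishing polynomial is `g (X ^ f)`, where `g` is the vanishing polynomial of `T`,
and the chain rule gives `Δ_S(a) = f a^(f-1) Δ_T(a^f)`, while `Δ_{S ∪ {0}}(a) = f a^f Δ_T(a^f)`
and `Δ_{S ∪ {0}}(0) = ∏_{c ∈ T} (-c)`. Every element of `𝔽_r` is a square in `𝔽_{r²}`, which makes
`-Δ` a square on `S ∪ {0}`. If `e` is even then `D ∣ e / 2`, so every element of `S` is a
square as well, and then `Δ_S` is a square on `S`.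
-/

open Polynomial Lagrange

section Delta

variable {F : Type*} [Field F] [DecidableEq F] {S : Finset F} {a b : F}

theorem deltaS_eq_eval_derivative_nodal_s13 (ha : a ∈ S) :
    deltaS S a = (derivative (nodal S id)).eval a := by
  have h := eval_nodal_derivative_eval_node_eq (v := id) ha
  rw [id_eq, eval_nodal] at h
  exact h.symm

theorem deltaS_insert_self (ha : a ∉ S) : deltaS (insert a S) a = (nodal S id).eval a := by
  rw [deltaS, erase_insert ha, eval_nodal]
  rfl

theorem deltaS_insert_of_mem (ha : a ∉ S) (hb : b ∈ S) :
    deltaS (insert a S) b = (b - a) * deltaS S b := by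
  rw [deltaS, erase_insert_of_ne (ne_of_mem_of_not_mem hb ha).symm,
    prod_insert fun h => ha (mem_of_mem_erase h)]
  rfl

theorem deltaS_mem {K : Subfield F} (hS : ∀ b ∈ S, b ∈ K) (ha : a ∈ K) : deltaS S a ∈ K :=
  prod_mem fun b hb => sub_mem ha (hS b (mem_of_mem_erase hb))

end Delta

section PowPreimage

variable {F : Type*} [Field F] [DecidableEq F] {f : ℕ} {ζ : F} {T : Finset F} {a : F}

noncomputable def powPreimage (f : ℕ) (T : Finset F) : Finset F :=
  T.biUnion fun c => nthRootsFinset f c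

theorem mem_powPreimage (hf : 0 < f) : a ∈ powPreimage f T ↔ a ^ f ∈ T := by
  simp [powPreimage, mem_nthRootsFinset hf]

theorem zero_notMem_powPreimage (hf : 0 < f) (hT : (0 : F) ∉ T) : 0 ∉ powPreimage f T := by
  rwa [mem_powPreimage hf, zero_pow hf.ne']

theorem X_pow_sub_C_eq_prod_nthRootsFinset (hζ : IsPrimitiveRoot ζ f) (hf : 0 < f) {α c : F}
    (hα : α ^ f = c) (hc : c ≠ 0) :
    X ^ f - C c = ∏ x ∈ nthRootsFinset f c, (X - C x) := by
  rw [(X_pow_sub_C_splits_of_isPrimitiveRoot hζ hα).eq_prod_roots_of_monic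
    (monic_X_pow_sub_C _ hf.ne'), nthRootsFinset_def, ← nthRoots,
    ← Multiset.toFinset_eq (hζ.nthRoots_nodup hc)]
  rfl

theorem nodal_powPreimage (hζ : IsPrimitiveRoot ζ f) (hf : 0 < f)
    (hT : ∀ c ∈ T, c ≠ 0 ∧ ∃ α, α ^ f = c) :
    nodal (powPreimage f T) id = (nodal T id).comp (X ^ f) := by
  have hdisj : (T : Set F).PairwiseDisjoint fun c => nthRootsFinset f c := by
    intro c _ c' _ hne
    simp only [Function.onFun, Finset.disjoint_left, mem_nthRootsFinset hf]
    exact fun x hx hx' => hne (hx ▸ hx')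
  rw [powPreimage, nodal, prod_biUnion hdisj, nodal, Polynomial.prod_comp]
  refine prod_congr rfl fun c hc => ?_
  obtain ⟨hc0, α, hα⟩ := hT c hc
  simp only [id_eq, sub_comp, X_comp, C_comp]
  exact (X_pow_sub_C_eq_prod_nthRootsFinset hζ hf hα hc0).symm

theorem card_powPreimage (hζ : IsPrimitiveRoot ζ f) (hf : 0 < f)
    (hT : ∀ c ∈ T, c ≠ 0 ∧ ∃ α, α ^ f = c) : #(powPreimage f T) = #T * f := by
  have h := congrArg natDegree (nodal_powPreimage hζ hf hT)
  rwa [natDegree_nodal, natDegree_comp, natDegree_nodal, natDegree_X_pow] at h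

theorem deltaS_powPreimage (hζ : IsPrimitiveRoot ζ f) (hf : 0 < f)
    (hT : ∀ c ∈ T, c ≠ 0 ∧ ∃ α, α ^ f = c) (ha : a ∈ powPreimage f T) :
    deltaS (powPreimage f T) a = f * a ^ (f - 1) * deltaS T (a ^ f) := by
  rw [deltaS_eq_eval_derivative_nodal_s13 ha, nodal_powPreimage hζ hf hT, derivative_comp,
    eval_mul, eval_comp, derivative_X_pow, eval_mul, eval_C, eval_pow, eval_X, eval_pow, eval_X,
    ← deltaS_eq_eval_derivative_nodal_s13 ((mem_powPreimage hf).mp ha)]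

theorem eval_zero_nodal_powPreimage (hζ : IsPrimitiveRoot ζ f) (hf : 0 < f)
    (hT : ∀ c ∈ T, c ≠ 0 ∧ ∃ α, α ^ f = c) :
    (nodal (powPreimage f T) id).eval 0 = (nodal T id).eval 0 := by
  rw [nodal_powPreimage hζ hf hT, eval_comp, eval_pow, eval_X, zero_pow hf.ne']

end PowPreimage

section Sigma

variable {F : Type*} [Field F] [DecidableEq F] {f : ℕ} {ζ : F} {T : Finset F}

theorem sigmaEG_of_subfield (K : Subfield F) (hK : ∀ x ∈ K, IsSquare x)
    (hζ : IsPrimitiveRoot ζ f) (hf : 0 < f) (hT : ∀ c ∈ T, c ∈ K ∧ c ≠ 0 ∧ ∃ α, α ^ f = c)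
    (heven : Even (#T * f)) : SigmaEG F (#T * f + 2) := by
  have hT' (c) (hc : c ∈ T) := (hT c hc).2
  have hTK (c) (hc : c ∈ T) := (hT c hc).1
  have h0 : (0 : F) ∉ powPreimage f T := zero_notMem_powPreimage hf fun h => (hT 0 h).2.1 rfl
  refine ⟨heven.add even_two, by omega, insert 0 (powPreimage f T), ?_, fun a ha => hK _ ?_⟩
  · rw [card_insert_of_notMem h0, card_powPreimage hζ hf hT']
    rfl
  rcases mem_insert.mp ha with rfl | ha
  · rw [deltaS_insert_self h0, eval_zero_nodal_powPreimage hζ hf hT', eval_nodal]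
    exact neg_mem (prod_mem fun c hc => sub_mem K.zero_mem (hTK c hc))
  · have haT := (mem_powPreimage hf).mp ha
    have hmul : a * a ^ (f - 1) = a ^ f := by rw [← pow_succ', Nat.sub_add_cancel hf]
    rw [deltaS_insert_of_mem h0 ha, deltaS_powPreimage hζ hf hT' ha, sub_zero,
      show a * (f * a ^ (f - 1) * deltaS T (a ^ f)) = f * (a * a ^ (f - 1)) * deltaS T (a ^ f) by
        ring, hmul]
    exact neg_mem (mul_mem (mul_mem (natCast_mem K f) (hTK _ haT)) (deltaS_mem hTK (hTK _ haT)))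

theorem sigmaG_of_subfield (K : Subfield F) (hK : ∀ x ∈ K, IsSquare x)
    (hζ : IsPrimitiveRoot ζ f) (hf : 0 < f) (hT : ∀ c ∈ T, c ∈ K ∧ c ≠ 0 ∧ ∃ α, α ^ f = c)
    (hsq : ∀ a : F, a ^ f ∈ T → IsSquare a) (heven : Even (#T * f)) (htwo : 2 ≤ #T * f) :
    SigmaG F (#T * f) := by
  have hT' (c) (hc : c ∈ T) := (hT c hc).2
  have hTK (c) (hc : c ∈ T) := (hT c hc).1
  refine ⟨heven, htwo, powPreimage f T, card_powPreimage hζ hf hT', Or.inl fun a ha => ?_⟩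
  have haT := (mem_powPreimage hf).mp ha
  rw [deltaS_powPreimage hζ hf hT' ha]
  exact ((hK _ (natCast_mem K f)).mul ((hsq a haT).pow _)).mul
    (hK _ (deltaS_mem hTK (hTK _ haT)))

end Sigma

namespace FiniteField

variable {F : Type*} [Field F] [Fintype F]

theorem card_sub_one_ne_zero : Fintype.card F - 1 ≠ 0 := by
  have := Fintype.one_lt_card (α := F)
  omega

variable (F) in
theorem exists_isPrimitiveRoot_card_sub_one_s13 :
    ∃ γ : F, IsPrimitiveRoot γ (Fintype.card F - 1) := by
  obtain ⟨g, hg⟩ := IsCyclic.exists_ofOrder_eq_natCard (α := Fˣ)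
  refine ⟨g, IsPrimitiveRoot.coe_units_iff.mpr ?_⟩
  rw [← Nat.card_eq_fintype_card, ← Nat.card_units, ← hg]
  exact IsPrimitiveRoot.orderOf g

theorem exists_isPrimitiveRoot_of_dvd_card_sub_one {f : ℕ} (hf : f ∣ Fintype.card F - 1) :
    ∃ ζ : F, IsPrimitiveRoot ζ f := by
  obtain ⟨γ, hγ⟩ := exists_isPrimitiveRoot_card_sub_one_s13 F
  obtain ⟨k, hk⟩ := hf
  exact ⟨γ ^ k, hγ.pow (Nat.pos_of_ne_zero card_sub_one_ne_zero) (hk.trans (mul_comm f k))⟩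

theorem exists_pow_eq_of_pow_eq_one {n f : ℕ} (hq : n * f ∣ Fintype.card F - 1) {c : F}
    (hc : c ^ n = 1) : ∃ α : F, α ^ f = c := by
  obtain ⟨γ, hγ⟩ := exists_isPrimitiveRoot_card_sub_one_s13 F
  have : NeZero (Fintype.card F - 1) := ⟨card_sub_one_ne_zero⟩
  have hn : n ≠ 0 := by
    rintro rfl
    exact card_sub_one_ne_zero (zero_dvd_iff.mp (zero_mul f ▸ hq))
  have hcq : c ^ (Fintype.card F - 1) = 1 := by
    obtain ⟨k, hk⟩ := dvd_of_mul_right_dvd hq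
    rw [hk, pow_mul, hc, one_pow]
  obtain ⟨i, -, rfl⟩ := hγ.eq_pow_of_pow_eq_one hcq
  have hfi : n * f ∣ n * i :=
    hq.trans ((hγ.pow_eq_one_iff_dvd _).mp (by rw [mul_comm, pow_mul, hc]))
  obtain ⟨j, rfl⟩ := Nat.dvd_of_mul_dvd_mul_left (Nat.pos_of_ne_zero hn) hfi
  exact ⟨γ ^ j, by rw [← pow_mul, mul_comm]⟩

theorem exists_finset_pow_eq_one {n f G t : ℕ} (hq : n * f ∣ Fintype.card F - 1) (hG : G ∣ n)
    (ht : t ≤ G) : ∃ T : Finset F, #T = t ∧ ∀ c ∈ T, c ^ G = 1 ∧ c ≠ 0 ∧ ∃ α, α ^ f = c := by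
  have hGq : G ∣ Fintype.card F - 1 := hG.trans (dvd_of_mul_right_dvd hq)
  have hG0 : 0 < G :=
    Nat.pos_of_ne_zero fun h => card_sub_one_ne_zero (zero_dvd_iff.mp (h ▸ hGq))
  obtain ⟨ξ, hξ⟩ := exists_isPrimitiveRoot_of_dvd_card_sub_one hGq
  obtain ⟨T, hTsub, hTcard⟩ := exists_subset_card_eq (hξ.card_nthRootsFinset ▸ ht)
  refine ⟨T, hTcard, fun c hc => ?_⟩
  have hcG : c ^ G = 1 := (mem_nthRootsFinset hG0 1).mp (hTsub hc)
  have hcn : c ^ n = 1 := by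
    obtain ⟨k, hk⟩ := hG
    rw [hk, pow_mul, hcG, one_pow]
  refine ⟨hcG, ?_, exists_pow_eq_of_pow_eq_one hq hcn⟩
  rintro rfl
  exact zero_ne_one ((zero_pow hG0.ne').symm.trans hcG)

theorem isSquare_of_pow_eq_one_of_two_mul_dvd {x : F} {n : ℕ} (hn : 2 * n ∣ Fintype.card F - 1)
    (hx : x ^ n = 1) : IsSquare x := by
  obtain ⟨k, hk⟩ := hn
  rw [mul_assoc] at hk
  have hq := card_sub_one_ne_zero (F := F)
  have hhalf : Fintype.card F / 2 = n * k := by omega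
  have hchar : ringChar F ≠ 2 := by
    rw [Ne, even_card_iff_char_two]
    omega
  have hx0 : x ≠ 0 := by
    rintro rfl
    obtain rfl : n = 0 := by
      by_contra h
      exact zero_ne_one ((zero_pow h).symm.trans hx)
    exact hq (by rw [hk, zero_mul, mul_zero])
  rw [isSquare_iff hchar hx0, hhalf, pow_mul, hx, one_pow]

theorem isSquare_of_pow_eq_self {r : ℕ} (hr : Odd r) (hF : Fintype.card F = r ^ 2) {x : F}
    (hx : x ^ r = x) : IsSquare x := by
  rcases eq_or_ne x 0 with rfl | hx0
  · exact IsSquare.zero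
  obtain ⟨k, rfl⟩ := hr
  have hdvd : 2 * (2 * k) ∣ Fintype.card F - 1 := ⟨k + 1, by rw [hF]; ring_nf; omega⟩
  exact isSquare_of_pow_eq_one_of_two_mul_dvd hdvd
    (mul_right_cancel₀ hx0 (by rw [← pow_succ, hx, one_mul]))

end FiniteField

open FiniteField

variable (F) in
def frobeniusFixedField [Field F] (p m : ℕ) [ExpChar F p] : Subfield F :=
  (iterateFrobenius F p m).eqLocusField (RingHom.id F)

theorem mem_frobeniusFixedField {F : Type*} [Field F] {p m : ℕ} [ExpChar F p] {x : F} :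
    x ∈ frobeniusFixedField F p m ↔ x ^ p ^ m = x :=
  Iff.rfl

theorem mem_frobeniusFixedField_of_pow_eq_one {F : Type*} [Field F] {p m n : ℕ} [ExpChar F p]
    {c : F} (hn : n ∣ p ^ m - 1) (hc : c ^ n = 1) : c ∈ frobeniusFixedField F p m := by
  obtain ⟨k, hk⟩ := hn
  rw [mem_frobeniusFixedField, ← Nat.sub_add_cancel (expChar_pow_pos F p m), pow_succ, hk,
    pow_mul, hc, one_pow, one_mul]

theorem Nat.div_gcd_dvd_of_mul_eq {a b e f s u : ℕ} (hf : 0 < f) (hu : 0 < u)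
    (hsb : s * u ∣ b) (hab : a * b = u * e * f) : s * a / Nat.gcd (s * a) f ∣ e := by
  have hd : 0 < Nat.gcd (s * a) f := Nat.gcd_pos_of_pos_right _ hf
  have hb : u * s * f ∣ Nat.gcd (s * a) f * b := by
    rw [← Nat.gcd_mul_right]
    refine Nat.dvd_gcd ⟨e, by rw [mul_assoc, hab]; ring⟩ ?_
    rw [mul_comm u s, mul_comm f b]
    exact mul_dvd_mul hsb dvd_rfl
  refine (Nat.div_dvd_iff_dvd_mul (Nat.gcd_dvd_left _ _) hd).mpr
    (Nat.dvd_of_mul_dvd_mul_right (Nat.mul_pos hu hf) ?_)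
  calc s * a * (u * f) = a * (u * s * f) := by ring
    _ ∣ a * (Nat.gcd (s * a) f * b) := mul_dvd_mul_left a hb
    _ = Nat.gcd (s * a) f * e * (u * f) := by rw [mul_left_comm, hab]; ring

theorem Nat.div_gcd_dvd_of_dvd {a f s : ℕ} (hf : 0 < f) (hsf : s ∣ f) :
    s * a / Nat.gcd (s * a) f ∣ a :=
  (Nat.div_dvd_iff_dvd_mul (Nat.gcd_dvd_left _ _) (Nat.gcd_pos_of_pos_right _ hf)).mpr
    (mul_dvd_mul_right (Nat.dvd_gcd (dvd_mul_right s a) hsf) a)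

theorem stmt_13_general (p m : ℕ) (hp : p.Prime) (hodd : p ≠ 2)
    (r : ℕ) (hr : r = p ^ m)
    (F : Type*) [Field F] [Fintype F] [DecidableEq F] (hF : Fintype.card F = r ^ 2)
    (e f s t : ℕ) (hef : r ^ 2 - 1 = e * f)
    (hse : Even s) (hsf : s ∣ f) (hsr : 2 * s ∣ r + 1)
    (ht1 : 1 ≤ t) (ht2 : t ≤ s * (r - 1) / Nat.gcd (s * (r - 1)) f) :
    SigmaEG F (t * f + 2) ∧ (Even e → SigmaG F (t * f)) := by
  have : Fact p.Prime := ⟨hp⟩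
  have : CharP F p := charP_of_card_eq_prime_pow (f := 2 * m) (by rw [hF, hr, ← pow_mul, mul_comm])
  have hrodd : Odd r := hr ▸ (hp.odd_of_ne_two hodd).pow
  have hq : Fintype.card F - 1 = e * f := hF ▸ hef
  have hf : 0 < f := Nat.pos_of_ne_zero fun h => card_sub_one_ne_zero (F := F) (by simp [hq, h])
  have hfeven : Even f := even_iff_two_dvd.mpr (hse.two_dvd.trans hsf)
  have hrr : (r - 1) * (r + 1) = e * f := by rw [mul_comm, ← Nat.sq_sub_sq, one_pow, hef]
  obtain ⟨ζ, hζ⟩ := exists_isPrimitiveRoot_of_dvd_card_sub_one (F := F) (hq ▸ dvd_mul_left f e)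
  set K := frobeniusFixedField F p m
  have hK (x : F) (hx : x ∈ K) : IsSquare x := isSquare_of_pow_eq_self hrodd hF (hr ▸ hx)
  set D := s * (r - 1) / Nat.gcd (s * (r - 1)) f
  have hDK (c : F) (hc : c ^ D = 1) : c ∈ K :=
    mem_frobeniusFixedField_of_pow_eq_one (hr ▸ Nat.div_gcd_dvd_of_dvd hf hsf) hc
  constructor
  · obtain ⟨T, hTcard, hT⟩ := exists_finset_pow_eq_one (n := e) (f := f) (dvd_of_eq hq.symm)
      (Nat.div_gcd_dvd_of_mul_eq (b := r + 1) hf one_pos (dvd_trans ⟨2, by ring⟩ hsr)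
        (by rw [hrr, one_mul])) ht2
    simpa only [hTcard] using sigmaEG_of_subfield K hK hζ hf
      (fun c hc => ⟨hDK c (hT c hc).1, (hT c hc).2⟩) (hTcard ▸ hfeven.mul_left t)
  · rintro ⟨e₂, rfl⟩
    have hD₂ : D ∣ e₂ := Nat.div_gcd_dvd_of_mul_eq (b := r + 1) hf two_pos (by rwa [mul_comm])
      (by rw [hrr]; ring)
    obtain ⟨T, hTcard, hT⟩ := exists_finset_pow_eq_one (f := f) ⟨2, by rw [hq]; ring⟩ hD₂ ht2
    have hsq (a : F) (ha : a ^ f ∈ T) : IsSquare a := by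
      refine isSquare_of_pow_eq_one_of_two_mul_dvd (n := f * e₂) ⟨1, by rw [hq]; ring⟩ ?_
      obtain ⟨k, hk⟩ := hD₂
      rw [pow_mul, hk, pow_mul, (hT _ ha).1, one_pow]
    simpa only [hTcard] using sigmaG_of_subfield K hK hζ hf
      (fun c hc => ⟨hDK c (hT c hc).1, (hT c hc).2⟩) hsq (hTcard ▸ hfeven.mul_left t)
      (hTcard ▸ (Nat.le_of_dvd hf hfeven.two_dvd).trans (Nat.le_mul_of_pos_left f ht1))

theorem stmt_13 (p m : ℕ) (hp : p.Prime) (hodd : p ≠ 2) (hm : 0 < m)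
    (r : ℕ) (hr : r = p ^ m)
    (F : Type*) [Field F] [Fintype F] [DecidableEq F] (hF : Fintype.card F = r ^ 2)
    (e f s t : ℕ) (hef : r ^ 2 - 1 = e * f)
    (hse : Even s) (hsf : s ∣ f) (hsr : 2 * s ∣ r + 1)
    (ht1 : 1 ≤ t) (ht2 : t ≤ s * (r - 1) / Nat.gcd (s * (r - 1)) f) :
    SigmaEG F (t * f + 2) ∧ (Even e → SigmaG F (t * f)) :=
  stmt_13_general p m hp hodd r hr F hF e f s t hef hse hsf hsr ht1 ht2
end
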